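/- arXiv:2101.06689 — 6 statements merged into one kernel-verified Lean document; each statement's English description precedes it below -/
import Mathlib

section
/- For all real α, β with 0 < β < α/2 < 1/4 there exists n₀ such that the following holds for all n ≥ n₀. Let H be an n-vertex graph with minimum degree δ(H) ≥ α·n which contains no matching of size greater than (n − √n)/2, and let M be a maximum matching in H. Then the vertex set of H can be partitioned into sets A, B₁, B₂, C₁, C₂, R such that: (H1) |A| ≤ 12β⁻²; (H2) n − 2|M| − |A| ≤ |R| ≤ n − 2|M|; (H3) |B₁| = |B₂|, the bipartite subgraph of H between B₁ and B₂ contains a perfect matching, and every vertex v ∈ B₂ ∪ R has at least (α − 2β)·n neighbours in B₁; and (H4) |C₁| = |C₂|, the bipartite subgraph of H between C₁ and C₂ contains a perfect matching, and every vertex v ∈ C₂ has at most β⁻¹ + 1 neighbours in B₂ ∪ R. -/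
namespace Stmt9
open Function Set

variable {n : ℕ}

def IsMat (H : SimpleGraph (Fin n)) (f : Fin n → Fin n) : Prop :=
  Involutive f ∧ ∀ v, f v ≠ v → H.Adj v (f v)

def covS (f : Fin n → Fin n) : Set (Fin n) := {v | f v ≠ v}

noncomputable def covc (f : Fin n → Fin n) : ℕ := (covS f).ncard

lemma mem_covS {f : Fin n → Fin n} {v : Fin n} : v ∈ covS f ↔ f v ≠ v := Iff.rfl

lemma covS_closed {f : Fin n → Fin n} (hinv : Involutive f) {v : Fin n}
    (hv : v ∈ covS f) : f v ∈ covS f := by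
  simp only [mem_covS] at *
  intro h
  exact hv (by conv_lhs => rw [← h]; rw [hinv v]; )

/-- key pairing induction: a finite set closed under a fixed-point-free-on-it involution
has even size, and in fact size `2 *` the number of unordered pairs. -/
lemma ncard_closed_eq_two_mul (f : Fin n → Fin n) (hinv : Involutive f) :
    ∀ k (s : Set (Fin n)), s.ncard = k → (∀ v ∈ s, f v ∈ s ∧ f v ≠ v) →
      s.ncard = 2 * ((fun v => s(v, f v)) '' s).ncard := by
  intro k
  induction k using Nat.strong_induction_on with
  | _ k ih =>
    intro s hk hcl
    rcases s.eq_empty_or_nonempty with rfl | ⟨v, hv⟩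
    · simp
    · have hfv := hcl v hv
      have hvfv : v ≠ f v := fun h => hfv.2 h.symm
      set s' := s \ {v, f v} with hs'
      have hsub : {v, f v} ⊆ s := by
        intro x hx; rcases hx with rfl | hx
        · exact hv
        · simp only [Set.mem_singleton_iff] at hx; subst hx; exact hfv.1
      have hpair : ({v, f v} : Set (Fin n)).ncard = 2 := by
        rw [Set.ncard_pair hvfv]
      have hcard' : s'.ncard = k - 2 := by
        rw [hs', Set.ncard_diff hsub (Set.toFinite _), hpair, hk]
      have hk2 : 2 ≤ k := by
        rw [← hk, ← hpair]; exact Set.ncard_le_ncard hsub (Set.toFinite _)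
      have hcl' : ∀ w ∈ s', f w ∈ s' ∧ f w ≠ w := by
        intro w hw
        obtain ⟨hws, hwn⟩ := hw
        refine ⟨⟨(hcl w hws).1, ?_⟩, (hcl w hws).2⟩
        intro hmem
        rcases hmem with h | h
        · apply hwn
          have : w = f v := by rw [← h, hinv w]
          simp [this]
        · simp only [Set.mem_singleton_iff] at h
          apply hwn
          have := congrArg f h
          rw [hinv w, hinv v] at this
          simp [this]
      have hrec := ih (k - 2) (by omega) s' hcard' hcl'
      -- image decomposition
      have himg : (fun w => s(w, f w)) '' s = insert s(v, f v) ((fun w => s(w, f w)) '' s') := by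
        apply Set.Subset.antisymm
        · rintro e ⟨w, hw, rfl⟩
          by_cases hwvf : w = v ∨ w = f v
          · left
            rcases hwvf with rfl | rfl
            · rfl
            · show s(f v, f (f v)) = s(v, f v)
              rw [hinv v]; exact Sym2.eq_swap
          · right
            push_neg at hwvf
            exact ⟨w, ⟨hw, by simp [hwvf.1, hwvf.2]⟩, rfl⟩
        · intro e he
          rcases he with rfl | ⟨w, hw, rfl⟩
          · exact ⟨v, hv, rfl⟩
          · exact ⟨w, hw.1, rfl⟩
      have hnotmem : s(v, f v) ∉ (fun w => s(w, f w)) '' s' := by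
        rintro ⟨w, hw, hwe⟩
        rw [Sym2.eq_iff] at hwe
        rcases hwe with ⟨h1, _⟩ | ⟨h1, h2⟩
        · exact hw.2 (by simp [h1])
        · exact hw.2 (by simp [h1])
      rw [himg, Set.ncard_insert_of_notMem hnotmem (Set.toFinite _)]
      rw [hcard'] at hrec
      omega

lemma covS_spec {H : SimpleGraph (Fin n)} {f : Fin n → Fin n} (hf : IsMat H f) :
    ∀ v ∈ covS f, f v ∈ covS f ∧ f v ≠ v := by
  intro v hv
  exact ⟨covS_closed hf.1 hv, hv⟩

lemma covc_even {H : SimpleGraph (Fin n)} {f : Fin n → Fin n} (hf : IsMat H f) :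
    Even (covc f) := by
  have := ncard_closed_eq_two_mul f hf.1 (covc f) (covS f) rfl (covS_spec hf)
  exact ⟨((fun v => s(v, f v)) '' covS f).ncard, by rw [covc, this]; ring⟩

open Classical in
noncomputable def matFun {H : SimpleGraph (Fin n)} {M : H.Subgraph} (hM : M.IsMatching) :
    Fin n → Fin n := fun v =>
  if h : v ∈ M.verts then (hM h).choose else v

open Classical in
lemma matFun_of_not_mem {H : SimpleGraph (Fin n)} {M : H.Subgraph} (hM : M.IsMatching)
    {v : Fin n} (hv : v ∉ M.verts) : matFun hM v = v := dif_neg hv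

open Classical in
lemma matFun_adj {H : SimpleGraph (Fin n)} {M : H.Subgraph} (hM : M.IsMatching)
    {v : Fin n} (hv : v ∈ M.verts) : M.Adj v (matFun hM v) := by
  simp only [matFun, dif_pos hv]
  exact (hM hv).choose_spec.1

lemma matFun_eq_of_adj {H : SimpleGraph (Fin n)} {M : H.Subgraph} (hM : M.IsMatching)
    {v w : Fin n} (hadj : M.Adj v w) : matFun hM v = w := by
  classical
  have hv : v ∈ M.verts := M.edge_vert hadj
  simp only [matFun, dif_pos hv]
  exact ((hM hv).choose_spec.2 w hadj).symm

lemma matFun_isMat {H : SimpleGraph (Fin n)} {M : H.Subgraph} (hM : M.IsMatching) :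
    IsMat H (matFun hM) := by
  constructor
  · intro v
    by_cases hv : v ∈ M.verts
    · have hadj := matFun_adj hM hv
      exact matFun_eq_of_adj hM hadj.symm
    · rw [matFun_of_not_mem hM hv, matFun_of_not_mem hM hv]
  · intro v hne
    by_cases hv : v ∈ M.verts
    · exact M.adj_sub (matFun_adj hM hv)
    · rw [matFun_of_not_mem hM hv] at hne
      exact absurd rfl hne

lemma covS_matFun {H : SimpleGraph (Fin n)} {M : H.Subgraph} (hM : M.IsMatching) :
    covS (matFun hM) = M.verts := by
  ext v
  simp only [mem_covS]
  constructor
  · intro h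
    by_contra hv
    exact h (matFun_of_not_mem hM hv)
  · intro hv h
    have hadj := matFun_adj hM hv
    rw [h] at hadj
    exact (H.loopless.irrefl v) (M.adj_sub hadj)

lemma edgeSet_eq_image {H : SimpleGraph (Fin n)} {M : H.Subgraph} (hM : M.IsMatching) :
    M.edgeSet = (fun v => s(v, matFun hM v)) '' M.verts := by
  ext e
  induction e using Sym2.inductionOn with
  | hf x y =>
    simp only [SimpleGraph.Subgraph.mem_edgeSet, Set.mem_image]
    constructor
    · intro hadj
      exact ⟨x, M.edge_vert hadj, by rw [matFun_eq_of_adj hM hadj]⟩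
    · rintro ⟨w, hw, hwe⟩
      rw [Sym2.eq_iff] at hwe
      rcases hwe with ⟨rfl, h2⟩ | ⟨h1, rfl⟩
      · rw [← h2]; exact matFun_adj hM hw
      · rw [← h1]; exact (matFun_adj hM hw).symm

lemma verts_ncard_eq {H : SimpleGraph (Fin n)} {M : H.Subgraph} (hM : M.IsMatching) :
    M.verts.ncard = 2 * M.edgeSet.ncard := by
  have h := ncard_closed_eq_two_mul (matFun hM) (matFun_isMat hM).1 (covc (matFun hM))
      (covS (matFun hM)) rfl (covS_spec (matFun_isMat hM))
  rw [covS_matFun] at h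
  rw [edgeSet_eq_image hM]
  exact h

/-- The subgraph matching associated to an involution. -/
def matSub (H : SimpleGraph (Fin n)) (f : Fin n → Fin n) (hf : IsMat H f) : H.Subgraph where
  verts := covS f
  Adj := fun x y => x ≠ y ∧ f x = y
  adj_sub := by
    rintro x y ⟨hne, rfl⟩
    exact hf.2 x (fun h => hne h.symm)
  edge_vert := by
    rintro x y ⟨hne, rfl⟩
    exact fun h => hne h.symm
  symm := by
    constructor
    rintro x y ⟨hne, rfl⟩
    exact ⟨fun h => hne h.symm, hf.1 x⟩

lemma matSub_isMatching {H : SimpleGraph (Fin n)} {f : Fin n → Fin n} (hf : IsMat H f) :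
    (matSub H f hf).IsMatching := by
  intro v hv
  refine ⟨f v, ⟨fun h => hv h.symm, rfl⟩, ?_⟩
  rintro w ⟨hne, rfl⟩
  rfl

lemma covc_le_of_max {H : SimpleGraph (Fin n)} {M : H.Subgraph} (hM : M.IsMatching)
    (hmax : ∀ M' : H.Subgraph, M'.IsMatching → M'.edgeSet.ncard ≤ M.edgeSet.ncard)
    {f : Fin n → Fin n} (hf : IsMat H f) : covc f ≤ covc (matFun hM) := by
  have h1 : covc f = 2 * (matSub H f hf).edgeSet.ncard := by
    have hv : (matSub H f hf).verts.ncard = 2 * (matSub H f hf).edgeSet.ncard :=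
      verts_ncard_eq (matSub_isMatching hf)
    rw [← hv]; rfl
  have h2 : covc (matFun hM) = 2 * M.edgeSet.ncard := by
    rw [covc, covS_matFun]; exact verts_ncard_eq hM
  rw [h1, h2]
  have := hmax _ (matSub_isMatching hf)
  omega

def MissOn (f : Fin n → Fin n) (S : Set (Fin n)) : Prop := ∀ s ∈ S, f s = s

open Classical in
noncomputable def flip (f g : Fin n → Fin n) (C : Set (Fin n)) : Fin n → Fin n :=
  fun x => if x ∈ C then g x else f x

section Flip
variable {H : SimpleGraph (Fin n)} {f g : Fin n → Fin n} {C : Set (Fin n)}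

open Classical

lemma flip_in (h : ∀ x, x ∈ C → (flip f g C) x = g x) : True := trivial

lemma flip_eq_in {x : Fin n} (hx : x ∈ C) : flip f g C x = g x := if_pos hx
lemma flip_eq_out {x : Fin n} (hx : x ∉ C) : flip f g C x = f x := if_neg hx

lemma flip_isMat (hf : IsMat H f) (hg : IsMat H g)
    (hCf : ∀ x ∈ C, f x ∈ C) (hCg : ∀ x ∈ C, g x ∈ C) : IsMat H (flip f g C) := by
  constructor
  · intro x
    by_cases hx : x ∈ C
    · rw [flip_eq_in hx, flip_eq_in (hCg x hx), hg.1]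
    · have hfx : f x ∉ C := fun h => hx (by
        have := hCf _ h
        rwa [hf.1] at this)
      rw [flip_eq_out hx, flip_eq_out hfx, hf.1]
  · intro x hne
    by_cases hx : x ∈ C
    · rw [flip_eq_in hx] at *
      exact hg.2 x hne
    · rw [flip_eq_out hx] at *
      exact hf.2 x hne

lemma flip_missOn {S : Set (Fin n)} (hf : MissOn f S) (hg : MissOn g S) :
    MissOn (flip f g C) S := by
  intro s hs
  by_cases hx : s ∈ C
  · rw [flip_eq_in hx]; exact hg s hs
  · rw [flip_eq_out hx]; exact hf s hs

lemma covS_flip : covS (flip f g C) = (C ∩ covS g) ∪ (covS f \ C) := by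
  ext x
  by_cases hx : x ∈ C
  · simp [mem_covS, flip_eq_in hx, hx]
  · simp [mem_covS, flip_eq_out hx, hx]

lemma covc_flip_eq :
    covc (flip f g C) + (C ∩ covS f).ncard = covc f + (C ∩ covS g).ncard := by
  have h1 : covS (flip f g C) = (C ∩ covS g) ∪ (covS f \ C) := covS_flip
  have hd1 : Disjoint (C ∩ covS g) (covS f \ C) := by
    apply Set.disjoint_left.2
    rintro x ⟨hxC, _⟩ ⟨_, hxnC⟩
    exact hxnC hxC
  have h2 : covS f = (C ∩ covS f) ∪ (covS f \ C) := by
    ext x; by_cases hx : x ∈ C <;> simp [hx]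
  have hd2 : Disjoint (C ∩ covS f) (covS f \ C) := by
    apply Set.disjoint_left.2
    rintro x ⟨hxC, _⟩ ⟨_, hxnC⟩
    exact hxnC hxC
  have e1 : covc (flip f g C) = (C ∩ covS g).ncard + (covS f \ C).ncard := by
    rw [covc, h1, Set.ncard_union_eq hd1 (Set.toFinite _) (Set.toFinite _)]
  have e2 : covc f = (C ∩ covS f).ncard + (covS f \ C).ncard := by
    rw [covc]
    conv_lhs => rw [h2]
    rw [Set.ncard_union_eq hd2 (Set.toFinite _) (Set.toFinite _)]
  omega

end Flip

section AddStrip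
variable {H : SimpleGraph (Fin n)} {f : Fin n → Fin n}

open Classical in
noncomputable def addE (f : Fin n → Fin n) (a d : Fin n) : Fin n → Fin n :=
  fun x => if x = a then d else if x = d then a else f x

lemma addE_isMat (hf : IsMat H f) {a d : Fin n} (hadj : H.Adj a d)
    (ha : f a = a) (hd : f d = d) : IsMat H (addE f a d) := by
  classical
  have hne : a ≠ d := hadj.ne
  constructor
  · intro x
    unfold addE
    by_cases hxa : x = a
    · subst hxa
      simp [if_neg (Ne.symm hne), hne]
    · by_cases hxd : x = d
      · subst hxd; simp
      · simp only [if_neg hxa, if_neg hxd]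
        have h1 : f x ≠ a := fun h => hxa (by rw [← ha, ← h, hf.1])
        have h2 : f x ≠ d := fun h => hxd (by rw [← hd, ← h, hf.1])
        simp only [if_neg h1, if_neg h2]
        exact hf.1 x
  · intro x hx
    unfold addE at *
    by_cases hxa : x = a
    · subst hxa; simpa [hne] using hadj
    · by_cases hxd : x = d
      · subst hxd; simp only [if_neg hxa, if_pos rfl] at *; exact hadj.symm
      · simp only [if_neg hxa, if_neg hxd] at *
        exact hf.2 x hx

lemma addE_out {a d x : Fin n} (hxa : x ≠ a) (hxd : x ≠ d) : addE f a d x = f x := by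
  classical
  simp [addE, hxa, hxd]

lemma addE_missOn {S : Set (Fin n)} (hf : MissOn f S) {a d : Fin n}
    (ha : a ∉ S) (hd : d ∉ S) : MissOn (addE f a d) S := by
  intro s hs
  have h1 : s ≠ a := by rintro rfl; exact ha hs
  have h2 : s ≠ d := by rintro rfl; exact hd hs
  rw [addE_out h1 h2]
  exact hf s hs

lemma addE_covc (hf : IsMat H f) {a d : Fin n} (hne : a ≠ d)
    (ha : f a = a) (hd : f d = d) : covc (addE f a d) = covc f + 2 := by
  classical
  have hcov : covS (addE f a d) = covS f ∪ {a, d} := by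
    ext x
    simp only [mem_covS, Set.mem_union, Set.mem_insert_iff, Set.mem_singleton_iff]
    by_cases hxa : x = a
    · subst hxa; simp [addE, hne, Ne.symm hne]
    · by_cases hxd : x = d
      · subst hxd; simp [addE, hne, Ne.symm hne]
      · rw [addE_out hxa hxd]
        simp [hxa, hxd]
  have hdisj : Disjoint (covS f) ({a, d} : Set (Fin n)) := by
    apply Set.disjoint_left.2
    rintro x hx (rfl | hx')
    · exact hx ha
    · simp only [Set.mem_singleton_iff] at hx'; subst hx'; exact hx hd
  rw [covc, hcov, Set.ncard_union_eq hdisj (Set.toFinite _) (Set.toFinite _),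
    Set.ncard_pair hne]
  rfl

open Classical in
noncomputable def stripE (f : Fin n → Fin n) (a : Fin n) : Fin n → Fin n :=
  fun x => if x = a ∨ x = f a then x else f x

lemma stripE_fix {a x : Fin n} (hx : x = a ∨ x = f a) : stripE f a x = x := by
  classical
  simp [stripE, hx]

lemma stripE_out {a x : Fin n} (hx : ¬(x = a ∨ x = f a)) : stripE f a x = f x := by
  classical
  simp only [stripE, if_neg hx]

lemma stripE_isMat (hf : IsMat H f) (a : Fin n) : IsMat H (stripE f a) := by
  constructor
  · intro x
    by_cases hx : x = a ∨ x = f a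
    · rw [stripE_fix hx, stripE_fix hx]
    · rw [stripE_out hx]
      have hfx : ¬(f x = a ∨ f x = f a) := by
        push_neg at hx ⊢
        constructor
        · intro h; exact hx.2 (by rw [← h, hf.1])
        · intro h
          have := congrArg f h
          rw [hf.1, hf.1] at this
          exact hx.1 this
      rw [stripE_out hfx]
      exact hf.1 x
  · intro x hx
    by_cases h : x = a ∨ x = f a
    · rw [stripE_fix h] at hx; exact absurd rfl hx
    · rw [stripE_out h] at *
      exact hf.2 x hx

lemma stripE_missOn {S : Set (Fin n)} (hf : MissOn f S) (a : Fin n) :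
    MissOn (stripE f a) S := by
  intro s hs
  by_cases h : s = a ∨ s = f a
  · exact stripE_fix h
  · rw [stripE_out h]; exact hf s hs

lemma stripE_covc (hf : IsMat H f) {a : Fin n} (ha : f a ≠ a) :
    covc (stripE f a) + 2 = covc f := by
  have hcov : covS (stripE f a) = covS f \ {a, f a} := by
    ext x
    simp only [mem_covS, Set.mem_diff, Set.mem_insert_iff, Set.mem_singleton_iff]
    by_cases hx : x = a ∨ x = f a
    · rw [stripE_fix hx]; simp [hx]
    · rw [stripE_out hx]
      push_neg at hx
      simp [hx]
  have hsub : ({a, f a} : Set (Fin n)) ⊆ covS f := by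
    rintro x (rfl | hx)
    · exact ha
    · simp only [Set.mem_singleton_iff] at hx; subst hx
      exact (covS_spec (⟨hf.1, hf.2⟩ : IsMat H f) a ha).1
  have h2 : ({a, f a} : Set (Fin n)).ncard = 2 := Set.ncard_pair (fun h => ha h.symm)
  rw [covc, hcov, Set.ncard_diff hsub (Set.toFinite _), h2]
  have := Set.ncard_le_ncard hsub (Set.toFinite (covS f))
  rw [h2] at this
  show (covS f).ncard - 2 + 2 = covc f
  rw [covc]
  omega

lemma stripE_misses (hf : IsMat H f) (a : Fin n) :
    stripE f a a = a ∧ stripE f a (f a) = f a :=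
  ⟨stripE_fix (Or.inl rfl), stripE_fix (Or.inr rfl)⟩

end AddStrip

section Orbit

lemma doubling_card_aux (r : ℕ) (hr : 0 < r) :
    ((Finset.range r).filter (fun j => 2*j % r = 0)).card +
    ((Finset.range r).filter (fun j => 2*j % r = 1 % r)).card ≤ 2 := by
  set J0 := (Finset.range r).filter (fun j => 2*j % r = 0) with hJ0
  set J1 := (Finset.range r).filter (fun j => 2*j % r = 1 % r) with hJ1
  rcases eq_or_lt_of_le (Nat.succ_le_of_lt hr) with h1 | h2
  · -- r = 1
    have hr1 : r = 1 := h1.symm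
    subst hr1
    have e0 : J0 ⊆ {0} := by
      intro j hj
      simp only [hJ0, Finset.mem_filter, Finset.mem_range] at hj
      simp [Nat.lt_one_iff.1 hj.1]
    have e1 : J1 ⊆ {0} := by
      intro j hj
      simp only [hJ1, Finset.mem_filter, Finset.mem_range] at hj
      simp [Nat.lt_one_iff.1 hj.1]
    calc J0.card + J1.card ≤ 1 + 1 := by
          exact add_le_add (by simpa using Finset.card_le_card e0) (by simpa using Finset.card_le_card e1)
      _ ≤ 2 := le_refl _
  · -- r ≥ 2
    have hr2 : 2 ≤ r := h2
    have h0 : ∀ j ∈ J0, j = 0 ∨ 2*j = r := by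
      intro j hj
      simp only [hJ0, Finset.mem_filter, Finset.mem_range] at hj
      obtain ⟨hjr, hmod⟩ := hj
      have hdvd : r ∣ 2*j := Nat.dvd_of_mod_eq_zero hmod
      obtain ⟨q, hq⟩ := hdvd
      have hq2 : q < 2 := by
        by_contra hq2
        push_neg at hq2
        have : 2 * r ≤ r * q := by
          calc 2 * r = r * 2 := by ring
            _ ≤ r * q := Nat.mul_le_mul_left r hq2
        omega
      interval_cases q <;> omega
    have h1 : ∀ j ∈ J1, 2*j = r + 1 := by
      intro j hj
      simp only [hJ1, Finset.mem_filter, Finset.mem_range] at hj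
      obtain ⟨hjr, hmod⟩ := hj
      rw [Nat.mod_eq_of_lt (by omega : 1 < r)] at hmod
      have := Nat.div_add_mod (2*j) r
      have hdiv : (2*j) / r < 2 := by
        by_contra hd
        push_neg at hd
        have : 2 * r ≤ r * ((2*j)/r) := by
          calc 2 * r = r * 2 := by ring
            _ ≤ r * ((2*j)/r) := Nat.mul_le_mul_left r hd
        omega
      interval_cases h : (2*j) / r <;> omega
    by_cases hpar : Even r
    · obtain ⟨m, hm⟩ := hpar
      have e1 : J1 = ∅ := by
        apply Finset.eq_empty_of_forall_notMem
        intro j hj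
        have := h1 j hj
        omega
      have e0 : J0 ⊆ {0, m} := by
        intro j hj
        rcases h0 j hj with rfl | hj2
        · simp
        · simp only [Finset.mem_insert, Finset.mem_singleton]
          right; omega
      have : J0.card ≤ 2 := by
        calc J0.card ≤ ({0, m} : Finset ℕ).card := Finset.card_le_card e0
          _ ≤ 2 := Finset.card_insert_le _ _ |>.trans (by simp)
      simp [e1]; omega
    · have e0 : J0 ⊆ {0} := by
        intro j hj
        rcases h0 j hj with rfl | hj2
        · simp
        · exfalso; exact hpar ⟨j, by omega⟩
      have e1 : J1 ⊆ {(r+1)/2} := by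
        intro j hj
        have := h1 j hj
        simp only [Finset.mem_singleton]
        omega
      have c0 : J0.card ≤ 1 := by simpa using Finset.card_le_card e0
      have c1 : J1.card ≤ 1 := by simpa using Finset.card_le_card e1
      omega

lemma orbit_core {f g : Fin n → Fin n} (hf : Involutive f) (hg : Involutive g)
    {d : Fin n} (hd : g d = d) :
    ∃ C : Set (Fin n), d ∈ C ∧ (∀ x ∈ C, f x ∈ C) ∧ (∀ x ∈ C, g x ∈ C) ∧
      ({x ∈ C | g x = x}).ncard + ({x ∈ C | f x = x}).ncard ≤ 2 := by
  set F : Equiv.Perm (Fin n) := hf.toPerm f with hF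
  set G : Equiv.Perm (Fin n) := hg.toPerm g with hG
  have hFapp : ∀ x, F x = f x := fun x => rfl
  have hGapp : ∀ x, G x = g x := fun x => rfl
  have hF2 : F * F = 1 := by
    ext x; simp [Equiv.Perm.mul_apply, hFapp, hf x]
  have hG2 : G * G = 1 := by
    ext x; simp [Equiv.Perm.mul_apply, hGapp, hg x]
  set ρ : Equiv.Perm (Fin n) := F * G with hρ
  have hρinv : ρ⁻¹ = G * F := by
    have h : (F * G) * (G * F) = 1 := by
      rw [mul_assoc, ← mul_assoc G G, hG2, one_mul, hF2]
    rw [hρ]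
    exact inv_eq_of_mul_eq_one_right h
  have hGconj : G * ρ = ρ⁻¹ * G := by
    rw [hρinv, hρ, mul_assoc]
  have hFconj : F * ρ = ρ⁻¹ * F := by
    rw [hρinv, hρ, ← mul_assoc, hF2, one_mul, mul_assoc, hF2, mul_one]
  have hGpow : ∀ j : ℕ, G * ρ^j = (ρ⁻¹)^j * G := by
    intro j
    induction j with
    | zero => simp
    | succ k ih =>
      rw [pow_succ, ← mul_assoc, ih, mul_assoc, hGconj, ← mul_assoc, ← pow_succ]
  have hFpow : ∀ j : ℕ, F * ρ^j = (ρ⁻¹)^j * F := by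
    intro j
    induction j with
    | zero => simp
    | succ k ih =>
      rw [pow_succ, ← mul_assoc, ih, mul_assoc, hFconj, ← mul_assoc, ← pow_succ]
  -- period
  have hper : Function.IsPeriodicPt (⇑ρ) (orderOf ρ) d := by
    show (⇑ρ)^[orderOf ρ] d = d
    rw [← Equiv.Perm.coe_pow, pow_orderOf_eq_one]
    simp
  have hdper : d ∈ Function.periodicPts (⇑ρ) :=
    ⟨orderOf ρ, orderOf_pos ρ, hper⟩
  set r := Function.minimalPeriod (⇑ρ) d with hr
  have hrpos : 0 < r := Function.minimalPeriod_pos_of_mem_periodicPts hdper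
  set e : ℕ → Fin n := fun j => (ρ^j) d with he
  have heiter : ∀ j, e j = (⇑ρ)^[j] d := by
    intro j
    exact congrFun (Equiv.Perm.coe_pow ρ j) d
  have hmod : ∀ j, e (j % r) = e j := by
    intro j
    rw [heiter, heiter]
    exact Function.iterate_mod_minimalPeriod_eq
  have hinj : ∀ i j, i < r → j < r → e i = e j → i = j := by
    intro i j hi hj hij
    have h := Function.iterate_injOn_Iio_minimalPeriod (f := ⇑ρ) (x := d)
    rw [heiter, heiter] at hij
    exact h hi hj hij
  have hadd : ∀ i j, e (i + j) = (ρ^i) (e j) := by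
    intro i j
    show (ρ^(i+j)) d = (ρ^i) ((ρ^j) d)
    rw [pow_add, Equiv.Perm.mul_apply]
  have heq : ∀ i j, e i = e j ↔ i % r = j % r := by
    intro i j
    constructor
    · intro h
      apply hinj _ _ (Nat.mod_lt _ hrpos) (Nat.mod_lt _ hrpos)
      rw [hmod, hmod]; exact h
    · intro h
      rw [← hmod i, ← hmod j, h]
  set C : Set (Fin n) := Set.range e with hC
  have hdC : d ∈ C := ⟨0, by simp [he]⟩
  have hcancel : ∀ j (x : Fin n), (ρ^j) (((ρ⁻¹)^j) x) = x := by
    intro j x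
    rw [← Equiv.Perm.mul_apply, inv_pow, mul_inv_cancel]
    rfl
  have hinvmem : ∀ j, ((ρ⁻¹)^j) d = e ((r - j % r) % r) := by
    intro j
    set k := (r - j % r) % r with hk
    have hjk : (j + k) % r = 0 := by
      have hd1 := Nat.div_add_mod j r
      by_cases ha : j % r = 0
      · have hk0 : k = 0 := by rw [hk, ha, Nat.sub_zero, Nat.mod_self]
        rw [hk0, Nat.add_zero, ha]
      · have hlt : r - j % r < r := by
          have := Nat.mod_lt j hrpos
          omega
        have hk0 : k = r - j % r := by rw [hk, Nat.mod_eq_of_lt hlt]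
        have h2 : j + k = r * (j / r) + r := by
          have := Nat.mod_lt j hrpos
          omega
        have h3 : r * (j / r) + r = (j / r + 1) * r := by ring
        rw [h2, h3, Nat.mul_mod_left]
    apply (ρ^j).injective
    rw [hcancel, ← hadd]
    have h0 : e 0 = d := by simp [he]
    rw [← h0, heq, Nat.zero_mod, hjk]
  have hρmem : ∀ x ∈ C, ρ x ∈ C := by
    rintro x ⟨j, rfl⟩
    refine ⟨j + 1, ?_⟩
    have h := hadd 1 j
    rw [add_comm 1 j] at h
    simpa using h
  have hg_e : ∀ j, g (e j) = ((ρ⁻¹)^j) d := by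
    intro j
    have h1 : g (e j) = (G * ρ^j) d := by
      rw [Equiv.Perm.mul_apply]
      rfl
    rw [h1, hGpow, Equiv.Perm.mul_apply]
    have : G d = d := hd
    rw [this]
  have hf_e : ∀ j, f (e j) = ((ρ⁻¹)^j) (ρ d) := by
    intro j
    have h1 : f (e j) = (F * ρ^j) d := by
      rw [Equiv.Perm.mul_apply]
      rfl
    rw [h1, hFpow, Equiv.Perm.mul_apply]
    have : F d = ρ d := by
      show F d = (F * G) d
      rw [Equiv.Perm.mul_apply]
      have : G d = d := hd
      rw [this]
    rw [this]
  have hgC : ∀ x ∈ C, g x ∈ C := by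
    rintro x ⟨j, rfl⟩
    rw [hg_e, hinvmem]
    exact ⟨_, rfl⟩
  have hfC : ∀ x ∈ C, f x ∈ C := by
    rintro x ⟨j, rfl⟩
    rw [hf_e]
    have h1 : ((ρ⁻¹)^j) (ρ d) = ρ (((ρ⁻¹)^j) d) := by
      rw [← Equiv.Perm.mul_apply, ← Equiv.Perm.mul_apply]
      congr 1
      exact (Commute.refl ρ).inv_left.pow_left j |>.symm.eq ▸ rfl
    rw [h1, hinvmem]
    exact hρmem _ ⟨_, rfl⟩
  -- fixed point counting
  set J0 := (Finset.range r).filter (fun j => 2*j % r = 0) with hJ0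
  set J1 := (Finset.range r).filter (fun j => 2*j % r = 1 % r) with hJ1
  have hmod2 : ∀ j, (2 * (j % r)) % r = (2 * j) % r := by
    intro j
    have h1 : j % r ≡ j [MOD r] := Nat.mod_modEq j r
    exact h1.mul_left 2
  have hSg : {x ∈ C | g x = x} ⊆ e '' ↑J0 := by
    rintro x ⟨⟨j, rfl⟩, hgx⟩
    refine ⟨j % r, ?_, hmod j⟩
    simp only [hJ0, Finset.coe_filter, Finset.mem_range, Set.mem_setOf_eq]
    refine ⟨Nat.mod_lt _ hrpos, ?_⟩
    rw [hmod2]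
    have h2 : e (2 * j) = e 0 := by
      have h3 : (ρ^j) (g (e j)) = (ρ^j) (e j) := by rw [hgx]
      rw [hg_e, hcancel, ← hadd] at h3
      have : j + j = 2 * j := by ring
      rw [this] at h3
      simpa [he] using h3.symm
    rw [heq] at h2
    simpa using h2
  have hSf : {x ∈ C | f x = x} ⊆ e '' ↑J1 := by
    rintro x ⟨⟨j, rfl⟩, hfx⟩
    refine ⟨j % r, ?_, hmod j⟩
    simp only [hJ1, Finset.coe_filter, Finset.mem_range, Set.mem_setOf_eq]
    refine ⟨Nat.mod_lt _ hrpos, ?_⟩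
    rw [hmod2]
    have h2 : e (2 * j) = e 1 := by
      have h3 : (ρ^j) (f (e j)) = (ρ^j) (e j) := by rw [hfx]
      rw [hf_e, hcancel, ← hadd] at h3
      have hone : ρ d = e 1 := by simp [he]
      have : j + j = 2 * j := by ring
      rw [this] at h3
      rw [← hone]
      exact h3.symm
    rw [heq] at h2
    exact h2
  have hcount : J0.card + J1.card ≤ 2 := doubling_card_aux r hrpos
  have c1 : ({x ∈ C | g x = x}).ncard ≤ J0.card := by
    calc ({x ∈ C | g x = x}).ncard ≤ (e '' ↑J0).ncard :=
          Set.ncard_le_ncard hSg (Set.toFinite _)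
      _ ≤ (↑J0 : Set ℕ).ncard := Set.ncard_image_le (Set.toFinite _)
      _ = J0.card := Set.ncard_coe_finset _
  have c2 : ({x ∈ C | f x = x}).ncard ≤ J1.card := by
    calc ({x ∈ C | f x = x}).ncard ≤ (e '' ↑J1).ncard :=
          Set.ncard_le_ncard hSf (Set.toFinite _)
      _ ≤ (↑J1 : Set ℕ).ncard := Set.ncard_image_le (Set.toFinite _)
      _ = J1.card := Set.ncard_coe_finset _
  exact ⟨C, hdC, hfC, hgC, by omega⟩

end Orbit

section Core
variable {H : SimpleGraph (Fin n)}

lemma ncard_inter_fix_split (g : Fin n → Fin n) (C : Set (Fin n)) :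
    (C ∩ covS g).ncard + ({x ∈ C | g x = x}).ncard = C.ncard := by
  have hsplit : C = (C ∩ covS g) ∪ {x ∈ C | g x = x} := by
    ext x
    by_cases hx : g x = x <;> simp [mem_covS, hx]
  have hdisj : Disjoint (C ∩ covS g) {x ∈ C | g x = x} := by
    apply Set.disjoint_left.2
    rintro x ⟨_, hx⟩ ⟨_, hx'⟩
    exact hx hx'
  conv_rhs => rw [hsplit]
  rw [Set.ncard_union_eq hdisj (Set.toFinite _) (Set.toFinite _)]

lemma flip_core {S : Set (Fin n)} {c : ℕ}
    (hub : ∀ f, IsMat H f → MissOn f S → covc f ≤ c)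
    {N Md : Fin n → Fin n} (hN : IsMat H N) (hNS : MissOn N S)
    (hMd : IsMat H Md) (hMdS : MissOn Md S) (hMdc : covc Md = c)
    {d : Fin n} (hdfix : Md d = d) (hdN : N d ≠ d) :
    ∃ (C : Set (Fin n)) (z : Fin n),
      z ≠ d ∧ N z = z ∧ z ∈ C ∧ d ∈ C ∧
      (∀ x, N x = x → x ∈ C → x = z) ∧
      (∀ x, Md x = x → x ∈ C → x = d) ∧
      (∃ MC, IsMat H MC ∧ MissOn MC S ∧ covc MC = c ∧
        (∀ x ∈ C, MC x = N x) ∧ (∀ x ∉ C, MC x = Md x)) ∧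
      (∃ NC, IsMat H NC ∧ MissOn NC S ∧ covc NC = covc N ∧
        (∀ x ∈ C, NC x = Md x) ∧ (∀ x ∉ C, NC x = N x)) := by
  obtain ⟨C, hdC, hNC, hMdC, hcnt⟩ := orbit_core hN.1 hMd.1 hdfix
  set p := ({x ∈ C | Md x = x}).ncard with hp
  set q := ({x ∈ C | N x = x}).ncard with hq
  have hp1 : 1 ≤ p := by
    rw [hp]
    have : d ∈ {x ∈ C | Md x = x} := ⟨hdC, hdfix⟩
    have hne : ({x ∈ C | Md x = x}).Nonempty := ⟨d, this⟩
    exact (Set.ncard_pos (Set.toFinite _)).2 hne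
  -- the flip Md→N on C
  have hMC : IsMat H (flip Md N C) := flip_isMat hMd hN hMdC hNC
  have hMCS : MissOn (flip Md N C) S := flip_missOn hMdS hNS
  have eq1 : covc (flip Md N C) + (C ∩ covS Md).ncard = covc Md + (C ∩ covS N).ncard :=
    covc_flip_eq
  have s1 : (C ∩ covS Md).ncard + p = C.ncard := ncard_inter_fix_split Md C
  have s2 : (C ∩ covS N).ncard + q = C.ncard := ncard_inter_fix_split N C
  have hMCle : covc (flip Md N C) ≤ c := hub _ hMC hMCS
  have hpq : p = 1 ∧ q = 1 := by
    constructor <;> omega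
  have hMCc : covc (flip Md N C) = c := by omega
  -- singletons
  obtain ⟨z, hz⟩ : ∃ z, {x ∈ C | N x = x} = {z} := Set.ncard_eq_one.1 (by omega)
  have hzC : z ∈ C ∧ N z = z := by
    have : z ∈ {x ∈ C | N x = x} := hz ▸ rfl
    exact this
  have hduniq : ∀ x, Md x = x → x ∈ C → x = d := by
    intro x hx hxC
    obtain ⟨d', hd'⟩ : ∃ d', {x ∈ C | Md x = x} = {d'} := Set.ncard_eq_one.1 (by omega)
    have h1 : x ∈ ({d'} : Set (Fin n)) := hd' ▸ (⟨hxC, hx⟩ : x ∈ {x ∈ C | Md x = x})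
    have h2 : d ∈ ({d'} : Set (Fin n)) := hd' ▸ (⟨hdC, hdfix⟩ : d ∈ {x ∈ C | Md x = x})
    simp only [Set.mem_singleton_iff] at h1 h2
    rw [h1, h2]
  have hzuniq : ∀ x, N x = x → x ∈ C → x = z := by
    intro x hx hxC
    have : x ∈ ({z} : Set (Fin n)) := hz ▸ (⟨hxC, hx⟩ : x ∈ {x ∈ C | N x = x})
    simpa using this
  have hzd : z ≠ d := fun h => hdN (h ▸ hzC.2)
  -- the other flip
  have hNC2 : IsMat H (flip N Md C) := flip_isMat hN hMd hNC hMdC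
  have hNCS : MissOn (flip N Md C) S := flip_missOn hNS hMdS
  have eq2 : covc (flip N Md C) + (C ∩ covS N).ncard = covc N + (C ∩ covS Md).ncard :=
    covc_flip_eq
  have hNCc : covc (flip N Md C) = covc N := by omega
  refine ⟨C, z, hzd, hzC.2, hzC.1, hdC, hzuniq, hduniq,
    ⟨flip Md N C, hMC, hMCS, hMCc, fun x hx => flip_eq_in hx, fun x hx => flip_eq_out hx⟩,
    ⟨flip N Md C, hNC2, hNCS, hNCc, fun x hx => flip_eq_in hx, fun x hx => flip_eq_out hx⟩⟩

end Core

section Stab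
variable {H : SimpleGraph (Fin n)}

lemma stab_core {S : Set (Fin n)} {c : ℕ}
    (hub : ∀ f, IsMat H f → MissOn f S → covc f ≤ c)
    {a d v : Fin n} (haS : a ∉ S) (hdS : d ∉ S)
    (hano : ∀ f, IsMat H f → MissOn f S → covc f = c → f a ≠ a)
    (hadj : H.Adj a d)
    {Md : Fin n → Fin n} (hMd : IsMat H Md) (hMdS : MissOn Md S) (hMdc : covc Md = c)
    (hMdd : Md d = d)
    {N : Fin n → Fin n} (hN : IsMat H N) (hNS : MissOn N S) (hNc : covc N + 2 = c)
    (hNa : N a = a) (hNv : N v = v) (hva : v ≠ a) :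
    ∃ f, IsMat H f ∧ MissOn f S ∧ covc f = c ∧ f v = v := by
  by_cases hvd : v = d
  · exact ⟨Md, hMd, hMdS, hMdc, hvd ▸ hMdd⟩
  by_cases hNd : N d = d
  · refine ⟨addE N a d, addE_isMat hN hadj hNa hNd, addE_missOn hNS haS hdS, ?_, ?_⟩
    · rw [addE_covc hN hadj.ne hNa hNd]; omega
    · rw [addE_out hva hvd]; exact hNv
  · obtain ⟨C, z, hzd, hNz, hzC, hdC, hzuniq, hduniq, ⟨MC, hMC, hMCS, hMCc, hMCin, hMCout⟩,
      ⟨NC, hNC, hNCS, hNCc, hNCin, hNCout⟩⟩ :=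
      flip_core hub hN hNS hMd hMdS hMdc hMdd hNd
    by_cases hvC : v ∈ C
    · have hvz : v = z := hzuniq v hNv hvC
      exact ⟨MC, hMC, hMCS, hMCc, by rw [hMCin v hvC]; exact hNv⟩
    by_cases haC : a ∈ C
    · have haz : a = z := hzuniq a hNa haC
      exact absurd (by rw [hMCin a haC]; exact hNa) (hano MC hMC hMCS hMCc)
    · have hNCa : NC a = a := by rw [hNCout a haC]; exact hNa
      have hNCd : NC d = d := by rw [hNCin d hdC]; exact hMdd
      have hNCv : NC v = v := by rw [hNCout v hvC]; exact hNv
      refine ⟨addE NC a d, addE_isMat hNC hadj hNCa hNCd, addE_missOn hNCS haS hdS, ?_, ?_⟩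
      · rw [addE_covc hNC hadj.ne hNCa hNCd, hNCc]; omega
      · rw [addE_out hva hvd]; exact hNCv

end Stab

noncomputable section MainDef

def Dset (H : SimpleGraph (Fin n)) (ν : ℕ) : Set (Fin n) :=
  {v | ∃ f, IsMat H f ∧ covc f = ν ∧ f v = v}

def Astar (H : SimpleGraph (Fin n)) (ν : ℕ) : Set (Fin n) :=
  {v | v ∉ Dset H ν ∧ ∃ d ∈ Dset H ν, H.Adj v d}

lemma Dset_Astar_disjoint (H : SimpleGraph (Fin n)) (ν : ℕ) :
    ∀ v ∈ Dset H ν, v ∉ Astar H ν := fun _ hv hA => hA.1 hv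

section Removal
variable {H : SimpleGraph (Fin n)} {m : Fin n → Fin n}

lemma removal (hm : IsMat H m) (hmax : ∀ f, IsMat H f → covc f ≤ covc m) :
    ∀ S : Finset (Fin n), ↑S ⊆ Astar H (covc m) →
      (∀ f, IsMat H f → MissOn f ↑S → covc f + 2 * S.card ≤ covc m) ∧
      (∀ v, v ∉ (S : Set (Fin n)) → ∀ f, IsMat H f → MissOn f ↑S →
        covc f + 2 * S.card = covc m → f v = v → v ∈ Dset H (covc m)) ∧
      (∀ v ∈ Dset H (covc m), ∃ f, IsMat H f ∧ MissOn f ↑S ∧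
        covc f + 2 * S.card = covc m ∧ f v = v) := by
  intro S
  induction S using Finset.induction_on with
  | empty =>
    intro _
    refine ⟨fun f hf _ => by simpa using hmax f hf, ?_, ?_⟩
    · intro v _ f hf _ hc hfv
      exact ⟨f, hf, by simpa using hc, hfv⟩
    · rintro v ⟨f, hf, hc, hfv⟩
      exact ⟨f, hf, fun s hs => by simp at hs, by simpa using hc, hfv⟩
  | @insert a S haS ih =>
    intro hins
    have haA : a ∈ Astar H (covc m) := hins (by simp)
    have hSA : ↑S ⊆ Astar H (covc m) := by
      intro x hx
      exact hins (by simp [hx])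
    obtain ⟨ub, ddown, dup⟩ := ih hSA
    have haD : a ∉ Dset H (covc m) := haA.1
    obtain ⟨d, hdD, hadj⟩ := haA.2
    have hdS : d ∉ (S : Set (Fin n)) := fun h => (hSA h).1 hdD
    have haSmem : a ∉ (S : Set (Fin n)) := by simpa using haS
    have hano : ∀ f, IsMat H f → MissOn f ↑S → covc f + 2 * S.card = covc m → f a ≠ a := by
      intro f hf hfS hc hfa
      exact haD (ddown a haSmem f hf hfS hc hfa)
    have hcard : (insert a S).card = S.card + 1 := Finset.card_insert_of_notMem haS
    have hmissS : ∀ f : Fin n → Fin n, MissOn f ↑(insert a S) → MissOn f ↑S := by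
      intro f hf s hs
      exact hf s (by simp at hs ⊢; right; exact hs)
    have hmissa : ∀ f : Fin n → Fin n, MissOn f ↑(insert a S) → f a = a := by
      intro f hf
      exact hf a (by simp)
    constructor
    · -- upper bound
      intro f hf hfS
      have h1 : covc f + 2 * S.card ≤ covc m := ub f hf (hmissS f hfS)
      have h2 : covc f + 2 * S.card ≠ covc m := by
        intro h
        exact hano f hf (hmissS f hfS) h (hmissa f hfS)
      obtain ⟨k1, hk1⟩ := covc_even hf
      obtain ⟨k2, hk2⟩ := covc_even hm
      rw [hcard]
      omega
    constructor
    · -- D preserved downwards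
      intro v hv f hf hfS hc hfv
      have hvS : v ∉ (S : Set (Fin n)) := fun h => hv (by simp at h ⊢; right; exact h)
      have hva : v ≠ a := fun h => hv (by simp [h])
      obtain ⟨Md, hMd, hMdS, hMdc, hMdd⟩ := dup d hdD
      have hub' : ∀ g, IsMat H g → MissOn g ↑S → covc g ≤ covc Md := by
        intro g hg hgS
        have := ub g hg hgS
        omega
      have hano' : ∀ g, IsMat H g → MissOn g ↑S → covc g = covc Md → g a ≠ a := by
        intro g hg hgS hgc
        exact hano g hg hgS (by omega)
      have hNc : covc f + 2 = covc Md := by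
        rw [hcard] at hc
        omega
      obtain ⟨g, hg, hgS, hgc, hgv⟩ := stab_core hub' haSmem hdS hano' hadj hMd hMdS rfl
        hMdd hf (hmissS f hfS) hNc (hmissa f hfS) hfv hva
      exact ddown v hvS g hg hgS (by omega) hgv
    · -- D preserved upwards
      intro v hvD
      obtain ⟨f, hf, hfS, hfc, hfv⟩ := dup v hvD
      have hfa : f a ≠ a := hano f hf hfS hfc
      refine ⟨stripE f a, stripE_isMat hf a, ?_, ?_, ?_⟩
      · intro s hs
        simp only [Finset.coe_insert, Set.mem_insert_iff] at hs
        rcases hs with rfl | hs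
        · exact (stripE_misses hf s).1
        · exact stripE_missOn hfS a s hs
      · have := stripE_covc hf hfa
        rw [hcard]
        omega
      · have hvfa : ¬(v = a ∨ v = f a) := by
          rintro (rfl | rfl)
          · exact haD hvD
          · rw [hf.1] at hfv
            exact hfa hfv.symm
        rw [stripE_out hvfa]
        exact hfv

end Removal
end MainDef

section G1sec
variable {H : SimpleGraph (Fin n)} {m : Fin n → Fin n}

lemma G1 (hm : IsMat H m) (hmax : ∀ f, IsMat H f → covc f ≤ covc m)
    {a : Fin n} (ha : a ∈ Astar H (covc m)) :
    m a ∈ Dset H (covc m) ∧ m a ≠ a := by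
  have haD : a ∉ Dset H (covc m) := ha.1
  have hma : m a ≠ a := fun h => haD ⟨m, hm, rfl, h⟩
  refine ⟨?_, hma⟩
  obtain ⟨d, hdD, hadj⟩ := ha.2
  obtain ⟨Md, hMd, hMdc, hMdd⟩ := hdD
  have hstrip := stripE_misses hm a
  have hcov := stripE_covc hm hma
  have hva : m a ≠ a := hma
  obtain ⟨f, hf, _, hfc, hfv⟩ := stab_core (S := ∅) (c := covc m)
    (fun f hf _ => hmax f hf) (Set.notMem_empty a) (Set.notMem_empty d)
    (fun f hf _ hc hfa => haD ⟨f, hf, hc, hfa⟩) hadj hMd (fun s hs => absurd hs (Set.notMem_empty s))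
    hMdc hMdd (stripE_isMat hm a) (fun s hs => absurd hs (Set.notMem_empty s))
    hcov hstrip.1 hstrip.2 hva
  exact ⟨f, hf, hfc, hfv⟩

open Classical in
noncomputable def mtil (H : SimpleGraph (Fin n)) (ν : ℕ) (m : Fin n → Fin n) : Fin n → Fin n :=
  fun v => if v ∈ Astar H ν ∨ m v ∈ Astar H ν then v else m v

lemma mtil_fix {ν : ℕ} {v : Fin n} (h : v ∈ Astar H ν ∨ m v ∈ Astar H ν) :
    mtil H ν m v = v := by
  classical
  simp [mtil, h]

lemma mtil_out {ν : ℕ} {v : Fin n} (h : ¬(v ∈ Astar H ν ∨ m v ∈ Astar H ν)) :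
    mtil H ν m v = m v := by
  classical
  simp only [mtil, if_neg h]

lemma mtil_isMat (hm : IsMat H m) (hmax : ∀ f, IsMat H f → covc f ≤ covc m) :
    IsMat H (mtil H (covc m) m) := by
  constructor
  · intro v
    by_cases hv : v ∈ Astar H (covc m) ∨ m v ∈ Astar H (covc m)
    · rw [mtil_fix hv, mtil_fix hv]
    · rw [mtil_out hv]
      have hmv : ¬(m v ∈ Astar H (covc m) ∨ m (m v) ∈ Astar H (covc m)) := by
        rw [hm.1]
        exact fun h => hv h.symm
      rw [mtil_out hmv, hm.1]
  · intro v hv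
    by_cases h : v ∈ Astar H (covc m) ∨ m v ∈ Astar H (covc m)
    · rw [mtil_fix h] at hv; exact absurd rfl hv
    · rw [mtil_out h] at *
      exact hm.2 v hv

lemma mtil_missOn : MissOn (mtil H ν m) (Astar H ν) :=
  fun s hs => mtil_fix (Or.inl hs)

lemma mtil_covc (hm : IsMat H m) (hmax : ∀ f, IsMat H f → covc f ≤ covc m) :
    covc (mtil H (covc m) m) + 2 * (Astar H (covc m)).ncard = covc m := by
  set ν := covc m with hν
  set A := Astar H ν with hA
  have himgA : ∀ x, x ∈ m '' A ↔ m x ∈ A := by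
    intro x
    constructor
    · rintro ⟨a, haA, rfl⟩
      rw [hm.1]; exact haA
    · intro h
      exact ⟨m x, h, hm.1 x⟩
  have hcov : covS (mtil H ν m) = covS m \ (A ∪ m '' A) := by
    ext x
    simp only [mem_covS, Set.mem_diff, Set.mem_union]
    by_cases hx : x ∈ A ∨ m x ∈ A
    · rw [mtil_fix hx]
      constructor
      · intro h; exact absurd rfl h
      · rintro ⟨_, hnot⟩
        exfalso
        apply hnot
        rcases hx with h | h
        · exact Or.inl h
        · exact Or.inr ((himgA x).2 h)
    · rw [mtil_out hx]
      constructor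
      · intro h
        refine ⟨h, ?_⟩
        rintro (h1 | h2)
        · exact hx (Or.inl h1)
        · exact hx (Or.inr ((himgA x).1 h2))
      · exact fun h => h.1
  have hsub : A ∪ m '' A ⊆ covS m := by
    rintro x (hxA | hxI)
    · exact (G1 hm hmax hxA).2
    · rw [himgA x] at hxI
      have h2 := (G1 hm hmax hxI).2
      rw [hm.1] at h2
      exact Ne.symm h2
  have hdisj : Disjoint A (m '' A) := by
    apply Set.disjoint_left.2
    intro x hxA hxI
    rw [himgA x] at hxI
    have := (G1 hm hmax hxI).1
    rw [hm.1] at this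
    exact hxA.1 this
  have hTcard : (A ∪ m '' A).ncard = 2 * A.ncard := by
    rw [Set.ncard_union_eq hdisj (Set.toFinite _) (Set.toFinite _),
      Set.ncard_image_of_injective _ hm.1.injective]
    ring
  have e1 : covc (mtil H ν m) = (covS m).ncard - (A ∪ m '' A).ncard := by
    rw [covc, hcov, Set.ncard_diff hsub (Set.toFinite _)]
  have e2 : (A ∪ m '' A).ncard ≤ (covS m).ncard :=
    Set.ncard_le_ncard hsub (Set.toFinite _)
  have e3 : ν = (covS m).ncard := rfl
  omega

end G1sec

/-- induced graph on `D` (other vertices isolated) -/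
def GDg (H : SimpleGraph (Fin n)) (D : Set (Fin n)) : SimpleGraph (Fin n) where
  Adj x y := x ∈ D ∧ y ∈ D ∧ H.Adj x y
  symm := by constructor; rintro x y ⟨h1, h2, h3⟩; exact ⟨h2, h1, h3.symm⟩
  loopless := by constructor; rintro x ⟨_, _, h⟩; exact H.loopless.irrefl x h

section Descent
variable {H : SimpleGraph (Fin n)} {m : Fin n → Fin n}

lemma descent (hm : IsMat H m) (hmax : ∀ f, IsMat H f → covc f ≤ covc m)
    (Sfin : Finset (Fin n)) (hSA : (Sfin : Set (Fin n)) = Astar H (covc m)) :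
    ∀ l (N : Fin n → Fin n), IsMat H N → MissOn N ↑Sfin →
      covc N + 2 * Sfin.card = covc m →
      ∀ u v (W : (GDg H (Dset H (covc m))).Walk u v), N u = u → N v = v → u ≠ v →
      W.length ≤ l → False := by
  have hSsub : (Sfin : Set (Fin n)) ⊆ Astar H (covc m) := hSA.le
  obtain ⟨ub, ddown, dup⟩ := removal hm hmax Sfin hSsub
  intro l
  induction l using Nat.strong_induction_on with
  | _ l ih =>
    intro N hN hNS hNc u v W hNu hNv huv hWl
    cases W with
    | nil => exact huv rfl
    | cons h W' =>
      rename_i t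
      have huD : u ∈ Dset H (covc m) := h.1
      have htD : t ∈ Dset H (covc m) := h.2.1
      have hadjut : H.Adj u t := h.2.2
      have hnotin : ∀ x, x ∈ Dset H (covc m) → x ∉ (Sfin : Set (Fin n)) := by
        intro x hx hmem
        exact (hSsub hmem).1 hx
      by_cases hW0 : W'.length = 0
      · -- adjacent exposed pair: augment
        have htv : t = v := W'.eq_of_length_eq_zero hW0
        subst htv
        have hadj : H.Adj u t := hadjut
        have hf : IsMat H (addE N u t) := addE_isMat hN hadj hNu hNv
        have hfS : MissOn (addE N u t) ↑Sfin :=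
          addE_missOn hNS (hnotin u huD) (hnotin t htD)
        have hfc : covc (addE N u t) = covc N + 2 := addE_covc hN hadj.ne hNu hNv
        have := ub _ hf hfS
        omega
      · have hWl' : W'.length + 1 ≤ l := by simpa using hWl
        have hl2 : 2 ≤ l := by omega
        have hut : u ≠ t := hadjut.ne
        by_cases hNt : N t = t
        · exact ih 1 (by omega) N hN hNS hNc u t
            (SimpleGraph.Walk.cons h SimpleGraph.Walk.nil) hNu hNt hut (by simp)
        · obtain ⟨Md, hMd, hMdS, hMdc, hMdt⟩ := dup t htD
          have hub' : ∀ g, IsMat H g → MissOn g ↑Sfin → covc g ≤ covc Md := by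
            intro g hg hgS
            have := ub g hg hgS
            omega
          obtain ⟨C, z, hzd, hNz, hzC, hdC, hzuniq, hduniq, _,
            ⟨NC, hNC, hNCS, hNCc, hNCin, hNCout⟩⟩ :=
            flip_core hub' hN hNS hMd hMdS rfl hMdt hNt
          have hNCt : NC t = t := by rw [hNCin t hdC]; exact hMdt
          have hNCc' : covc NC + 2 * Sfin.card = covc m := by omega
          by_cases huC : u ∈ C
          · have huz : u = z := hzuniq u hNu huC
            have hvC : v ∉ C := by
              intro hvC
              exact huv (huz.trans (hzuniq v hNv hvC).symm)
            have hNCv : NC v = v := by rw [hNCout v hvC]; exact hNv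
            have htv : t ≠ v := fun hh => hNt (hh ▸ hNv)
            exact ih W'.length (by omega) NC hNC hNCS hNCc' t v W' hNCt hNCv htv le_rfl
          · have hNCu : NC u = u := by rw [hNCout u huC]; exact hNu
            exact ih 1 (by omega) NC hNC hNCS hNCc' u t
              (SimpleGraph.Walk.cons h SimpleGraph.Walk.nil) hNCu hNCt hut (by simp)

end Descent

section Specials
variable {H : SimpleGraph (Fin n)} {m : Fin n → Fin n}

def specl (H : SimpleGraph (Fin n)) (ν : ℕ) (m : Fin n → Fin n) (v : Fin n) : Prop :=
  v ∈ Dset H ν ∧ (m v = v ∨ m v ∈ Astar H ν)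

lemma specials_unique (hm : IsMat H m) (hmax : ∀ f, IsMat H f → covc f ≤ covc m)
    {u v : Fin n} (hu : specl H (covc m) m u) (hv : specl H (covc m) m v)
    (hreach : (GDg H (Dset H (covc m))).Reachable u v) : u = v := by
  by_contra huv
  obtain ⟨W⟩ := hreach
  set ν := covc m with hν
  have hAfin : (Astar H ν).Finite := Set.toFinite _
  set Sfin := hAfin.toFinset with hSfin
  have hcoe : (Sfin : Set (Fin n)) = Astar H ν := hAfin.coe_toFinset
  have hcard : Sfin.card = (Astar H ν).ncard := (Set.ncard_eq_toFinset_card _ hAfin).symm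
  have hmtil := mtil_isMat hm hmax
  have hmtilS : MissOn (mtil H ν m) ↑Sfin := by
    rw [hcoe]; exact mtil_missOn
  have hmtilc : covc (mtil H ν m) + 2 * Sfin.card = ν := by
    rw [hcard]; exact mtil_covc hm hmax
  have hmu : mtil H ν m u = u := by
    rcases hu.2 with h | h
    · by_cases hc : u ∈ Astar H ν ∨ m u ∈ Astar H ν
      · exact mtil_fix hc
      · rw [mtil_out hc]; exact h
    · exact mtil_fix (Or.inr h)
  have hmv : mtil H ν m v = v := by
    rcases hv.2 with h | h
    · by_cases hc : v ∈ Astar H ν ∨ m v ∈ Astar H ν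
      · exact mtil_fix hc
      · rw [mtil_out hc]; exact h
    · exact mtil_fix (Or.inr h)
  exact descent hm hmax Sfin hcoe W.length (mtil H ν m) hmtil hmtilS hmtilc u v W
    hmu hmv huv le_rfl

end Specials

lemma card_le_of_disjoint_big {T : Set (Fin n)} {K : Fin n → Set (Fin n)}
    (hmem : ∀ v ∈ T, v ∈ K v)
    (hdisj : ∀ u ∈ T, ∀ v ∈ T, u ≠ v → Disjoint (K u) (K v))
    {b : ℝ} (hbig : ∀ v ∈ T, b ≤ ((K v).ncard : ℝ)) :
    (T.ncard : ℝ) * b ≤ n := by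
  classical
  set TF := (Set.toFinite T).toFinset with hTF
  have hTFcoe : (TF : Set (Fin n)) = T := (Set.toFinite T).coe_toFinset
  set KF : Fin n → Finset (Fin n) := fun v => (Set.toFinite (K v)).toFinset with hKF
  have hKFcoe : ∀ v, (KF v : Set (Fin n)) = K v := fun v => (Set.toFinite (K v)).coe_toFinset
  have hdisjF : ∀ u ∈ TF, ∀ v ∈ TF, u ≠ v → Disjoint (KF u) (KF v) := by
    intro u hu v hv huv
    rw [← Finset.disjoint_coe, hKFcoe, hKFcoe]
    exact hdisj u (hTFcoe ▸ hu) v (hTFcoe ▸ hv) huv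
  have hsum : (TF.biUnion KF).card = ∑ v ∈ TF, (KF v).card :=
    Finset.card_biUnion hdisjF
  have hle : (TF.biUnion KF).card ≤ n := by
    have := Finset.card_le_univ (TF.biUnion KF)
    simpa using this
  have hsumle : ∑ v ∈ TF, (KF v).card ≤ n := by omega
  have hcast : ((∑ v ∈ TF, (KF v).card : ℕ) : ℝ) = ∑ v ∈ TF, ((KF v).card : ℝ) := by
    push_cast; rfl
  have hcardT : T.ncard = TF.card := Set.ncard_eq_toFinset_card _ _
  have hbigF : ∀ v ∈ TF, b ≤ ((KF v).card : ℝ) := by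
    intro v hv
    have h1 : (KF v).card = (K v).ncard := (Set.ncard_eq_toFinset_card _ _).symm
    rw [h1]
    exact hbig v (hTFcoe ▸ hv)
  calc (T.ncard : ℝ) * b = ∑ _v ∈ TF, b := by
        rw [hcardT, Finset.sum_const, nsmul_eq_mul, mul_comm]
    _ ≤ ∑ v ∈ TF, ((KF v).card : ℝ) := Finset.sum_le_sum hbigF
    _ = ((∑ v ∈ TF, (KF v).card : ℕ) : ℝ) := hcast.symm
    _ ≤ n := by exact_mod_cast hsumle

section Master
variable {H : SimpleGraph (Fin n)} {m : Fin n → Fin n}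

lemma master (hm : IsMat H m) (hmax : ∀ f, IsMat H f → covc f ≤ covc m)
    (α β : ℝ) (hβ : 0 < β) (hβα : β < α / 2) (hα : α / 2 < 1 / 4)
    (hn : (2 / β^2 : ℝ) ≤ n)
    (hdeg : ∀ v, α * n ≤ ((H.neighborSet v).ncard : ℝ)) :
    ∃ A B₁ B₂ C₁ C₂ R : Set (Fin n),
      (A ∪ B₁ ∪ B₂ ∪ C₁ ∪ C₂ ∪ R = Set.univ) ∧
      List.Pairwise (fun s t : Set (Fin n) => Disjoint s t) [A, B₁, B₂, C₁, C₂, R] ∧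
      ((A.ncard : ℝ) ≤ 12 / β ^ 2) ∧
      ((n : ℝ) - (covc m : ℝ) - A.ncard ≤ (R.ncard : ℝ) ∧
        (R.ncard : ℝ) ≤ (n : ℝ) - (covc m : ℝ)) ∧
      (B₁.ncard = B₂.ncard ∧
        (∃ f : B₁ ≃ B₂, ∀ x : B₁, H.Adj x.1 (f x).1) ∧
        ∀ v ∈ B₂ ∪ R,
          (α - 2 * β) * n ≤ ({w : Fin n | w ∈ B₁ ∧ H.Adj v w}.ncard : ℝ)) ∧
      (C₁.ncard = C₂.ncard ∧
        (∃ g : C₁ ≃ C₂, ∀ x : C₁, H.Adj x.1 (g x).1) ∧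
        ∀ v ∈ C₂,
          ({w : Fin n | w ∈ B₂ ∪ R ∧ H.Adj v w}.ncard : ℝ) ≤ β⁻¹ + 1) := by
  classical
  set ν := covc m with hν
  set D := Dset H ν with hD
  set As := Astar H ν with hAs
  set GD := GDg H D with hGD
  set Ksupp : Fin n → Set (Fin n) := fun v => {w | GD.Reachable v w} with hKsupp
  set U : Set (Fin n) := {v | m v = v} with hU
  set sp : Fin n → Prop := fun v => v ∈ D ∧ (m v = v ∨ m v ∈ As) with hsp
  set big : Fin n → Prop := fun v => β * n < ((Ksupp v).ncard : ℝ) with hbig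
  set Sbig : Set (Fin n) := {v | sp v ∧ big v} with hSbig
  set Aset : Set (Fin n) := Sbig ∪ m '' Sbig with hAset
  set Rset : Set (Fin n) := U \ Aset with hRset
  set B2 : Set (Fin n) := {v | v ∈ D ∧ m v ∉ D} \ Aset with hB2
  set B1 : Set (Fin n) := m '' B2 with hB1
  set Cset : Set (Fin n) := Set.univ \ (Aset ∪ B1 ∪ B2 ∪ Rset) with hCset
  set C1 : Set (Fin n) := {v | v ∈ Cset ∧ v < m v} with hC1
  set C2 : Set (Fin n) := {v | v ∈ Cset ∧ m v < v} with hC2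
  -- basic positivity
  have hβn : (0:ℝ) < β^2 := by positivity
  have hnpos : (0:ℝ) < n := by
    have h2 : (0:ℝ) < 2 / β^2 := by positivity
    linarith
  have hn1 : 1 ≤ n := by exact_mod_cast Nat.one_le_iff_ne_zero.2 (by
    intro h
    rw [h] at hnpos
    simp at hnpos)
  -- basic facts
  have hUD : ∀ v, m v = v → v ∈ D := fun v h => ⟨m, hm, rfl, h⟩
  have hDA : ∀ v ∈ D, v ∉ As := fun v hv hA => hA.1 hv
  have hAD : ∀ v ∈ As, v ∉ D := fun v hv hD' => hv.1 hD'
  have hnbr : ∀ v ∈ D, ∀ w, H.Adj v w → w ∈ D ∨ w ∈ As := by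
    intro v hv w hadj
    by_cases hw : w ∈ D
    · exact Or.inl hw
    · exact Or.inr ⟨hw, v, hv, hadj.symm⟩
  have hG1 : ∀ a ∈ As, m a ∈ D ∧ m a ≠ a := fun a ha => G1 hm hmax ha
  have hspU : ∀ v ∈ U, sp v := fun v hv => ⟨hUD v hv, Or.inl hv⟩
  have hB2m : ∀ v ∈ B2, m v ∈ As ∧ m v ≠ v ∧ sp v := by
    rintro v ⟨⟨hvD, hvmD⟩, hvA⟩
    have hmv : m v ≠ v := fun h => hvmD (by rw [h]; exact hvD)
    have hadj : H.Adj v (m v) := hm.2 v hmv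
    have hmA : m v ∈ As := ⟨hvmD, v, hvD, hadj.symm⟩
    exact ⟨hmA, hmv, hvD, Or.inr hmA⟩
  have hspB2R : ∀ v ∈ B2 ∪ Rset, sp v ∧ ¬ big v ∧ v ∈ D := by
    rintro v (hv | hv)
    · obtain ⟨_, _, hsp'⟩ := hB2m v hv
      refine ⟨hsp', ?_, hsp'.1⟩
      intro hbigv
      exact hv.2 (Or.inl ⟨hsp', hbigv⟩)
    · have hsp' := hspU v hv.1
      refine ⟨hsp', ?_, hsp'.1⟩
      intro hbigv
      exact hv.2 (Or.inl ⟨hsp', hbigv⟩)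
  have hG2 : ∀ u' v', sp u' → sp v' → GD.Reachable u' v' → u' = v' := by
    intro u' v' hu' hv' hr
    exact specials_unique hm hmax hu' hv' hr
  -- A* ⊆ B1 ∪ Aset
  have hAsub : ∀ a ∈ As, a ∈ B1 ∪ Aset := by
    intro a ha
    obtain ⟨hpD, hpne⟩ := hG1 a ha
    set p := m a with hp
    have hmp : m p = a := hm.1 a
    have hpsp : sp p := ⟨hpD, Or.inr (hmp ▸ ha)⟩
    by_cases hbigp : big p
    · right
      right
      exact ⟨p, ⟨hpsp, hbigp⟩, hmp⟩
    · left
      refine ⟨p, ⟨⟨hpD, ?_⟩, ?_⟩, hmp⟩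
      · rw [hmp]; exact hAD a ha
      · rintro (hpS | ⟨s, hsS, hms⟩)
        · exact hbigp hpS.2
        · have hsa : m (m s) = a := by rw [hms, hmp]
          rw [hm.1] at hsa
          rw [hsa] at hsS
          exact (hAD a ha) hsS.1.1
  -- closure of Cset under m
  have hCcl : ∀ v ∈ Cset, m v ≠ v ∧ m v ∈ Cset := by
    rintro v ⟨-, hv⟩
    simp only [Set.mem_union, not_or] at hv
    obtain ⟨⟨⟨hvA, hvB1⟩, hvB2⟩, hvR⟩ := hv
    have hmvne : m v ≠ v := by
      intro h
      exact hvR ⟨h, hvA⟩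
    refine ⟨hmvne, ⟨Set.mem_univ _, ?_⟩⟩
    simp only [Set.mem_union, not_or]
    have hmvA : m v ∉ Aset := by
      rintro (hS | ⟨s, hsS, hms⟩)
      · -- m v ∈ Sbig : then v = m (m v) and v ∈ m '' Sbig ⊆ Aset
        exact hvA (Or.inr ⟨m v, hS, hm.1 v⟩)
      · have : s = v := by rw [← hm.1 s, hms, hm.1]
        subst this
        exact hvA (Or.inl hsS)
    have hmvB2 : m v ∉ B2 := by
      intro hB
      exact hvB1 ⟨m v, hB, hm.1 v⟩
    have hmvB1 : m v ∉ B1 := by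
      rintro ⟨b, hb, hmb⟩
      have : b = v := by rw [← hm.1 b, hmb, hm.1]
      subst this
      exact hvB2 hb
    have hmvR : m v ∉ Rset := by
      rintro ⟨hmU, -⟩
      have h2 : m (m v) = m v := hmU
      rw [hm.1] at h2
      exact hmvne h2.symm
    exact ⟨⟨⟨hmvA, hmvB1⟩, hmvB2⟩, hmvR⟩
  -- size of Sbig and Aset
  have hmemK : ∀ v, v ∈ Ksupp v := fun v => SimpleGraph.Reachable.refl v
  have hSdisj : ∀ u ∈ Sbig, ∀ v ∈ Sbig, u ≠ v → Disjoint (Ksupp u) (Ksupp v) := by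
    intro u hu v hv huv
    rw [Set.disjoint_left]
    intro x hxu hxv
    exact huv (hG2 u v hu.1 hv.1 ((hxu : GD.Reachable u x).trans (hxv : GD.Reachable v x).symm))
  have hSbound : (Sbig.ncard : ℝ) * (β * n) ≤ n := by
    apply card_le_of_disjoint_big (fun v _ => hmemK v) hSdisj
    intro v hv
    exact le_of_lt hv.2
  have hβnpos : (0:ℝ) < β * n := by positivity
  have hSle : (Sbig.ncard : ℝ) ≤ 1 / β := by
    rw [le_div_iff₀ hβ]
    by_contra hcon
    push_neg at hcon
    have h2 : (1:ℝ) * n < (Sbig.ncard : ℝ) * β * n := by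
      apply mul_lt_mul_of_pos_right _ hnpos
      linarith
    rw [one_mul] at h2
    rw [mul_assoc] at h2
    linarith
  have hAle : (Aset.ncard : ℝ) ≤ 2 / β := by
    have h1 : Aset.ncard ≤ Sbig.ncard + (m '' Sbig).ncard := Set.ncard_union_le _ _
    have h2 : (m '' Sbig).ncard ≤ Sbig.ncard := Set.ncard_image_le (Set.toFinite _)
    have h3 : (Aset.ncard : ℝ) ≤ 2 * Sbig.ncard := by
      push_cast
      have : (Aset.ncard : ℝ) ≤ (Sbig.ncard : ℝ) + (m '' Sbig).ncard := by exact_mod_cast h1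
      have h2' : ((m '' Sbig).ncard : ℝ) ≤ Sbig.ncard := by exact_mod_cast h2
      linarith
    calc (Aset.ncard : ℝ) ≤ 2 * Sbig.ncard := h3
      _ ≤ 2 * (1/β) := by linarith
      _ = 2 / β := by ring
  have hβ8 : β < 1/4 := by linarith
  have hH1 : (Aset.ncard : ℝ) ≤ 12 / β^2 := by
    have h1 : 2 / β ≤ 12 / β^2 := by
      rw [div_le_div_iff₀ hβ hβn]
      nlinarith
    linarith
  -- |U| + ν = n
  have hUeq : U = Set.univ \ covS m := by
    ext v
    simp only [hU, Set.mem_setOf_eq, Set.mem_diff, Set.mem_univ, true_and, mem_covS,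
      not_not]
  have hνn : ν + U.ncard = n := by
    have h1 : (covS m) ⊆ Set.univ := Set.subset_univ _
    have h2 : U.ncard = (Set.univ : Set (Fin n)).ncard - (covS m).ncard := by
      rw [hUeq, Set.ncard_diff h1 (Set.toFinite _)]
    have h3 : (Set.univ : Set (Fin n)).ncard = n := by
      rw [Set.ncard_univ]
      simp
    have h4 : (covS m).ncard ≤ (Set.univ : Set (Fin n)).ncard :=
      Set.ncard_le_ncard h1 (Set.toFinite _)
    rw [h3] at h2 h4
    have h5 : ν = (covS m).ncard := rfl
    omega
  -- H2 bounds
  have hRsub : Rset ⊆ U := Set.diff_subset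
  have hRle : Rset.ncard ≤ U.ncard := Set.ncard_le_ncard hRsub (Set.toFinite _)
  have hUle : U.ncard ≤ Rset.ncard + Aset.ncard := by
    have h1 : U ⊆ Rset ∪ Aset := by
      intro v hv
      by_cases hA : v ∈ Aset
      · exact Or.inr hA
      · exact Or.inl ⟨hv, hA⟩
    calc U.ncard ≤ (Rset ∪ Aset).ncard := Set.ncard_le_ncard h1 (Set.toFinite _)
      _ ≤ Rset.ncard + Aset.ncard := Set.ncard_union_le _ _
  have hH2a : (n : ℝ) - (ν : ℝ) - Aset.ncard ≤ (Rset.ncard : ℝ) := by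
    have := hνn
    have h1 : (ν:ℝ) + U.ncard = n := by exact_mod_cast this
    have h2 : (U.ncard : ℝ) ≤ Rset.ncard + Aset.ncard := by exact_mod_cast hUle
    linarith
  have hH2b : (Rset.ncard : ℝ) ≤ (n : ℝ) - ν := by
    have h1 : (ν:ℝ) + U.ncard = n := by exact_mod_cast hνn
    have h2 : (Rset.ncard : ℝ) ≤ U.ncard := by exact_mod_cast hRle
    linarith
  -- B1/B2 matching
  have hmemB2toB1 : ∀ y ∈ B2, m y ∈ B1 := fun y hy => ⟨y, hy, rfl⟩
  have hmemB1toB2 : ∀ x ∈ B1, m x ∈ B2 := by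
    rintro x ⟨b, hb, rfl⟩
    rw [hm.1]
    exact hb
  have hB1card : B1.ncard = B2.ncard := Set.ncard_image_of_injective _ hm.1.injective
  have hB1ne : ∀ x ∈ B1, m x ≠ x := by
    rintro x ⟨b, hb, rfl⟩
    rw [hm.1]
    intro h
    exact (hB2m b hb).2.1 h.symm
  -- H3 degree bound
  have hAβn : (Aset.ncard : ℝ) ≤ β * n := by
    have h1 : 2 / β ≤ β * n := by
      rw [div_le_iff₀ hβ]
      calc (2:ℝ) = (2/β^2) * β^2 := by field_simp
        _ ≤ n * β^2 := by
          apply mul_le_mul_of_nonneg_right hn (le_of_lt hβn)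
        _ = β * n * β := by ring
    linarith
  have hH3 : ∀ v ∈ B2 ∪ Rset,
      (α - 2 * β) * n ≤ (({w : Fin n | w ∈ B1 ∧ H.Adj v w}).ncard : ℝ) := by
    intro v hv
    obtain ⟨hspv, hnbig, hvD⟩ := hspB2R v hv
    set X := {w : Fin n | w ∈ B1 ∧ H.Adj v w} with hX
    have hsub : H.neighborSet v ⊆ X ∪ Ksupp v ∪ Aset := by
      intro w hw
      have hadj : H.Adj v w := hw
      rcases hnbr v hvD w hadj with hwD | hwA
      · left; right
        exact SimpleGraph.Adj.reachable (show GD.Adj v w from ⟨hvD, hwD, hadj⟩)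
      · rcases hAsub w hwA with hwB1 | hwAset
        · left; left
          exact ⟨hwB1, hadj⟩
        · right; exact hwAset
    have hc1 : (H.neighborSet v).ncard ≤ X.ncard + (Ksupp v).ncard + Aset.ncard := by
      calc (H.neighborSet v).ncard ≤ ((X ∪ Ksupp v) ∪ Aset).ncard :=
            Set.ncard_le_ncard hsub (Set.toFinite _)
        _ ≤ (X ∪ Ksupp v).ncard + Aset.ncard := Set.ncard_union_le _ _
        _ ≤ X.ncard + (Ksupp v).ncard + Aset.ncard := by
            have := Set.ncard_union_le X (Ksupp v)
            omega
    have hKle : ((Ksupp v).ncard : ℝ) ≤ β * n := not_lt.1 hnbig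
    have hd := hdeg v
    have hc1' : ((H.neighborSet v).ncard : ℝ) ≤ X.ncard + (Ksupp v).ncard + Aset.ncard := by
      exact_mod_cast hc1
    linarith
  -- C1/C2 matching
  have hC2C1 : ∀ v, v ∈ C2 ↔ m v ∈ C1 := by
    intro v
    constructor
    · rintro ⟨hvC, hlt⟩
      obtain ⟨hne, hmC⟩ := hCcl v hvC
      refine ⟨hmC, ?_⟩
      rw [hm.1]
      exact hlt
    · rintro ⟨hmC, hlt⟩
      rw [hm.1] at hlt
      obtain ⟨hne, hmmC⟩ := hCcl (m v) hmC
      rw [hm.1] at hmmC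
      exact ⟨hmmC, hlt⟩
  have hC2img : C2 = m '' C1 := by
    ext v
    constructor
    · intro hv
      exact ⟨m v, (hC2C1 v).1 hv, hm.1 v⟩
    · rintro ⟨x, hx, rfl⟩
      apply (hC2C1 (m x)).2
      rw [hm.1]
      exact hx
  have hC1card : C1.ncard = C2.ncard := by
    rw [hC2img, Set.ncard_image_of_injective _ hm.1.injective]
  -- H4
  have hβinv : (0:ℝ) ≤ β⁻¹ := by positivity
  have hH4 : ∀ v ∈ C2,
      (({w : Fin n | w ∈ B2 ∪ Rset ∧ H.Adj v w}).ncard : ℝ) ≤ β⁻¹ + 1 := by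
    intro v hv
    obtain ⟨hvC, hlt⟩ := hv
    set Y := {w : Fin n | w ∈ B2 ∪ Rset ∧ H.Adj v w} with hY
    by_cases hvD : v ∈ D
    · have hsub : Y.ncard ≤ 1 := by
        rw [Set.ncard_le_one_iff (Set.toFinite _)]
        intro a b ha hb
        have haD := (hspB2R a ha.1).2.2
        have hbD := (hspB2R b hb.1).2.2
        have hra : GD.Reachable a v :=
          (SimpleGraph.Adj.reachable (show GD.Adj v a from ⟨hvD, haD, ha.2⟩)).symm
        have hrb : GD.Reachable v b :=
          SimpleGraph.Adj.reachable (show GD.Adj v b from ⟨hvD, hbD, hb.2⟩)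
        exact hG2 a b (hspB2R a ha.1).1 (hspB2R b hb.1).1 (hra.trans hrb)
      have : (Y.ncard : ℝ) ≤ 1 := by exact_mod_cast hsub
      linarith
    · have hempty : Y = ∅ := by
        rw [Set.eq_empty_iff_forall_notMem]
        rintro w ⟨hwBR, hadj⟩
        have hwD := (hspB2R w hwBR).2.2
        rcases hnbr w hwD v hadj.symm with h | h
        · exact hvD h
        · rcases hAsub v h with hB1' | hAset'
          · exact hvC.2 (Or.inl (Or.inl (Or.inr hB1')))
          · exact hvC.2 (Or.inl (Or.inl (Or.inl hAset')))
      rw [hempty]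
      simp
      positivity
  -- partition
  have hunion : Aset ∪ B1 ∪ B2 ∪ C1 ∪ C2 ∪ Rset = Set.univ := by
    apply Set.eq_univ_of_forall
    intro v
    simp only [Set.mem_union]
    by_cases h1 : v ∈ Aset
    · tauto
    by_cases h2 : v ∈ B1
    · tauto
    by_cases h3 : v ∈ B2
    · tauto
    by_cases h4 : v ∈ Rset
    · tauto
    have hvC : v ∈ Cset := ⟨Set.mem_univ v, by
      simp only [Set.mem_union, not_or]
      exact ⟨⟨⟨h1, h2⟩, h3⟩, h4⟩⟩
    obtain ⟨hne, -⟩ := hCcl v hvC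
    rcases lt_trichotomy v (m v) with hlt | heq | hgt
    · have : v ∈ C1 := ⟨hvC, hlt⟩
      tauto
    · exact absurd heq.symm hne
    · have : v ∈ C2 := ⟨hvC, hgt⟩
      tauto
  -- disjointness
  have hB1As : B1 ⊆ As := by
    rintro x ⟨b, hb, rfl⟩
    exact (hB2m b hb).1
  have hdAB1 : Disjoint Aset B1 := by
    rw [Set.disjoint_left]
    rintro x hxA ⟨b, hb, rfl⟩
    rcases hxA with hS | ⟨s, hsS, hms⟩
    · exact (hAD _ (hB1As ⟨b, hb, rfl⟩)) hS.1.1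
    · have : s = b := hm.1.injective hms
      subst this
      exact hb.2 (Or.inl hsS)
  have hdAB2 : Disjoint Aset B2 := by
    rw [Set.disjoint_right]
    intro x hx
    exact hx.2
  have hdAC : ∀ x ∈ Cset, x ∉ Aset := by
    intro x hx
    intro h
    exact hx.2 (Or.inl (Or.inl (Or.inl h)))
  have hdAR : Disjoint Aset Rset := by
    rw [Set.disjoint_right]
    intro x hx
    exact hx.2
  have hdB1B2 : Disjoint B1 B2 := by
    rw [Set.disjoint_left]
    intro x hx1 hx2
    exact (hAD x (hB1As hx1)) hx2.1.1
  have hdB1C : ∀ x ∈ Cset, x ∉ B1 := by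
    intro x hx h
    exact hx.2 (Or.inl (Or.inl (Or.inr h)))
  have hdB1R : Disjoint B1 Rset := by
    rw [Set.disjoint_left]
    intro x hx1 hx2
    exact (hAD x (hB1As hx1)) (hUD x hx2.1)
  have hdB2C : ∀ x ∈ Cset, x ∉ B2 := by
    intro x hx h
    exact hx.2 (Or.inl (Or.inr h))
  have hdB2R : Disjoint B2 Rset := by
    rw [Set.disjoint_left]
    intro x hx1 hx2
    exact hx1.1.2 (by rw [hx2.1]; exact hx1.1.1)
  have hdCR : ∀ x ∈ Cset, x ∉ Rset := by
    intro x hx h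
    exact hx.2 (Or.inr h)
  have hdC1C2 : Disjoint C1 C2 := by
    rw [Set.disjoint_left]
    rintro x ⟨-, h1⟩ ⟨-, h2⟩
    exact absurd (h1.trans h2) (lt_irrefl x)
  have hC1sub : C1 ⊆ Cset := fun x hx => hx.1
  have hC2sub : C2 ⊆ Cset := fun x hx => hx.1
  -- the equivs
  have hB2mne : ∀ y ∈ B2, m y ≠ y := fun y hy => (hB2m y hy).2.1
  refine ⟨Aset, B1, B2, C1, C2, Rset, hunion, ?_, hH1, ⟨hH2a, hH2b⟩,
    ⟨hB1card, ?_, hH3⟩, ⟨hC1card, ?_, hH4⟩⟩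
  · -- pairwise disjoint
    refine List.Pairwise.cons ?_ (List.Pairwise.cons ?_ (List.Pairwise.cons ?_
      (List.Pairwise.cons ?_ (List.Pairwise.cons ?_ (List.pairwise_singleton _ _)))))
    · intro t ht
      simp only [List.mem_cons, List.not_mem_nil, or_false] at ht
      rcases ht with rfl | rfl | rfl | rfl | rfl
      · exact hdAB1
      · exact hdAB2
      · rw [Set.disjoint_right]
        intro x hx
        exact hdAC x (hC1sub hx)
      · rw [Set.disjoint_right]
        intro x hx
        exact hdAC x (hC2sub hx)
      · exact hdAR
    · intro t ht
      simp only [List.mem_cons, List.not_mem_nil, or_false] at ht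
      rcases ht with rfl | rfl | rfl | rfl
      · exact hdB1B2
      · rw [Set.disjoint_right]
        intro x hx
        exact hdB1C x (hC1sub hx)
      · rw [Set.disjoint_right]
        intro x hx
        exact hdB1C x (hC2sub hx)
      · exact hdB1R
    · intro t ht
      simp only [List.mem_cons, List.not_mem_nil, or_false] at ht
      rcases ht with rfl | rfl | rfl
      · rw [Set.disjoint_right]
        intro x hx
        exact hdB2C x (hC1sub hx)
      · rw [Set.disjoint_right]
        intro x hx
        exact hdB2C x (hC2sub hx)
      · exact hdB2R
    · intro t ht
      simp only [List.mem_cons, List.not_mem_nil, or_false] at ht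
      rcases ht with rfl | rfl
      · exact hdC1C2
      · rw [Set.disjoint_left]
        intro x hx
        exact hdCR x (hC1sub hx)
    · intro t ht
      simp only [List.mem_cons, List.not_mem_nil, or_false] at ht
      rcases ht with rfl
      rw [Set.disjoint_left]
      intro x hx
      exact hdCR x (hC2sub hx)
  · -- B1 ≃ B2
    refine ⟨⟨fun x => ⟨m x, hmemB1toB2 x x.2⟩, fun y => ⟨m y, hmemB2toB1 y y.2⟩,
      fun x => Subtype.ext (hm.1 x), fun y => Subtype.ext (hm.1 y)⟩, ?_⟩
    intro x
    exact hm.2 x (hB1ne x x.2)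
  · -- C1 ≃ C2
    have hmemC1toC2 : ∀ x ∈ C1, m x ∈ C2 := by
      intro x hx
      apply (hC2C1 (m x)).2
      rw [hm.1]
      exact hx
    have hmemC2toC1 : ∀ y ∈ C2, m y ∈ C1 := fun y hy => (hC2C1 y).1 hy
    refine ⟨⟨fun x => ⟨m x, hmemC1toC2 x x.2⟩, fun y => ⟨m y, hmemC2toC1 y y.2⟩,
      fun x => Subtype.ext (hm.1 x), fun y => Subtype.ext (hm.1 y)⟩, ?_⟩
    intro x
    exact hm.2 x (fun h => absurd (h ▸ x.2.2) (lt_irrefl _))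

end Master

end Stmt9

/-- Partition lemma: if `0 < β < α/2 < 1/4`, `H` is an `n`-vertex graph with minimum degree
at least `αn` containing no matching of size greater than `(n − √n)/2`, and `M` is a maximum
matching in `H`, then `V(H)` can be partitioned into `A, B₁, B₂, C₁, C₂, R` satisfying
(H1)–(H4). -/
theorem stmt9 (α β : ℝ) (hβ : 0 < β) (hβα : β < α / 2) (hα : α / 2 < 1 / 4) :
    ∃ n₀ : ℕ, ∀ n ≥ n₀, ∀ H : SimpleGraph (Fin n),
      (∀ v : Fin n, α * n ≤ ((H.neighborSet v).ncard : ℝ)) →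
      (∀ M' : H.Subgraph, M'.IsMatching →
        (M'.edgeSet.ncard : ℝ) ≤ ((n : ℝ) - Real.sqrt n) / 2) →
      ∀ M : H.Subgraph, M.IsMatching →
      (∀ M' : H.Subgraph, M'.IsMatching → M'.edgeSet.ncard ≤ M.edgeSet.ncard) →
      ∃ A B₁ B₂ C₁ C₂ R : Set (Fin n),
        -- the six sets partition the vertex set
        (A ∪ B₁ ∪ B₂ ∪ C₁ ∪ C₂ ∪ R = Set.univ) ∧
        List.Pairwise (fun s t : Set (Fin n) => Disjoint s t) [A, B₁, B₂, C₁, C₂, R] ∧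
        -- (H1)
        ((A.ncard : ℝ) ≤ 12 / β ^ 2) ∧
        -- (H2)
        ((n : ℝ) - 2 * M.edgeSet.ncard - A.ncard ≤ (R.ncard : ℝ) ∧
          (R.ncard : ℝ) ≤ (n : ℝ) - 2 * M.edgeSet.ncard) ∧
        -- (H3)
        (B₁.ncard = B₂.ncard ∧
          (∃ f : B₁ ≃ B₂, ∀ x : B₁, H.Adj x.1 (f x).1) ∧
          ∀ v ∈ B₂ ∪ R,
            (α - 2 * β) * n ≤ ({w : Fin n | w ∈ B₁ ∧ H.Adj v w}.ncard : ℝ)) ∧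
        -- (H4)
        (C₁.ncard = C₂.ncard ∧
          (∃ g : C₁ ≃ C₂, ∀ x : C₁, H.Adj x.1 (g x).1) ∧
          ∀ v ∈ C₂,
            ({w : Fin n | w ∈ B₂ ∪ R ∧ H.Adj v w}.ncard : ℝ) ≤ β⁻¹ + 1) := by
  classical
  refine ⟨Nat.ceil (2 / β^2 : ℝ), ?_⟩
  intro n hn H hdeg _hsmall M hM hmaxM
  have hm := Stmt9.matFun_isMat hM
  have hmax : ∀ f, Stmt9.IsMat H f → Stmt9.covc f ≤ Stmt9.covc (Stmt9.matFun hM) :=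
    fun f hf => Stmt9.covc_le_of_max hM hmaxM hf
  have hnR : (2 / β^2 : ℝ) ≤ n := by
    calc (2 / β^2 : ℝ) ≤ (Nat.ceil (2 / β^2 : ℝ) : ℝ) := Nat.le_ceil _
      _ ≤ n := by exact_mod_cast hn
  obtain ⟨A, B₁, B₂, C₁, C₂, R, h1, h2, h3, ⟨h4a, h4b⟩, h5, h6⟩ :=
    Stmt9.master hm hmax α β hβ hβα hα hnR hdeg
  have hcov : (Stmt9.covc (Stmt9.matFun hM) : ℝ) = 2 * M.edgeSet.ncard := by
    have e1 : Stmt9.covc (Stmt9.matFun hM) = M.verts.ncard := by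
      rw [Stmt9.covc, Stmt9.covS_matFun]
    rw [e1, Stmt9.verts_ncard_eq hM]
    push_cast
    ring
  rw [hcov] at h4a h4b
  exact ⟨A, B₁, B₂, C₁, C₂, R, h1, h2, h3, ⟨h4a, h4b⟩, h5, h6⟩
end

section
/- Let G be a graph that is a vertex-disjoint union of paths and cycles, with exactly p components that are paths and c components that are cycles. Let P₁, P₂ ⊆ G be two vertex-disjoint subpaths of G, each with at least one edge. Let x be an endpoint of P₁ and y an endpoint of P₂, and assume e := {x, y} is not an edge of G. Then the graph (G \ (P₁ ∪ P₂)) ∪ {e}, obtained from G by deleting all edges of P₁ and P₂ and adding the edge e, is a vertex-disjoint union of paths and cycles, with at most p + 1 components that are paths with at least one edge, and at most c + 1 components that are cycles. -/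
/-!
Away from `x` and `y` the new graph `G'` only loses edges, while `x` and `y` trade their edge on
`P₁`, resp. `P₂`, for the edge `xy`; so all degrees stay at most 2. A cycle component of `G'` not
through `xy` has all its vertices at the maximal degree 2, so it kept all its edges of `G` and was
already a cycle component of `G`.

Path components are counted through vertices of degree 1: by the handshake lemma a component with
one such vertex has a second one, while a component of `G` has at most two vertices of degree
at most 1, since it has at least `n - 1` edges. An inner vertex of `P₁` or `P₂` loses both of its
edges, so only the far endpoints of `P₁` and `P₂` can newly get degree 1, whence
`2 p' ≤ #{deg' = 1} ≤ #{deg ≤ 1} + 2 ≤ 2 p + 2`.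
-/

open Finset

lemma Set.ncard_pair_sdiff_singleton_le_one {α : Type*} {a b x : α} (hx : x = a ∨ x = b) :
    ({a, b} \ {x} : Set α).ncard ≤ 1 := by
  obtain ⟨e, he⟩ : ∃ e, ({a, b} \ {x} : Set α) ⊆ {e} := by
    rcases hx with rfl | rfl
    exacts [⟨b, by grind⟩, ⟨a, by grind⟩]
  exact (Set.ncard_le_ncard he).trans (Set.ncard_singleton e).le

namespace SimpleGraph

variable {V : Type*} {G : SimpleGraph V}

lemma ncard_neighborSet_eq_degree (G : SimpleGraph V) [Fintype V] [DecidableRel G.Adj] (v : V) :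
    (G.neighborSet v).ncard = G.degree v := by
  rw [← card_neighborFinset_eq_degree, neighborFinset_def, Set.ncard_eq_toFinset_card']

lemma ConnectedComponent.ncard_neighborSet_toSimpleGraph (C : G.ConnectedComponent) (v : C) :
    (C.toSimpleGraph.neighborSet v).ncard = (G.neighborSet v).ncard := by
  refine Set.ncard_preimage_of_injective_subset_range Subtype.val_injective fun w hw => ?_
  exact ⟨⟨w, C.mem_supp_of_adj_mem_supp v.2 hw⟩, rfl⟩

lemma exists_ne_reachable_ncard_neighborSet_eq_one [Finite V]
    (hG : ∀ v, (G.neighborSet v).ncard ≤ 2) {v : V} (hv : (G.neighborSet v).ncard = 1) :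
    ∃ w ≠ v, G.Reachable v w ∧ (G.neighborSet w).ncard = 1 := by
  classical
  have := Fintype.ofFinite V
  set C := G.connectedComponentMk v
  have hdeg (w : C) : C.toSimpleGraph.degree w = (G.neighborSet w).ncard := by
    rw [← ncard_neighborSet_eq_degree, C.ncard_neighborSet_toSimpleGraph]
  obtain ⟨w, hwv, hodd⟩ :=
    C.toSimpleGraph.exists_ne_odd_degree_of_exists_odd_degree ⟨v, rfl⟩ (by rw [hdeg, hv]; simp)
  rw [hdeg, Nat.odd_iff] at hodd
  refine ⟨w, fun h => hwv (Subtype.ext h), ConnectedComponent.exact w.2.symm, ?_⟩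
  have := hG w
  omega

lemma Connected.ncard_le_two_of_ncard_neighborSet_le_two [Finite V] (hconn : G.Connected)
    (hG : ∀ v, (G.neighborSet v).ncard ≤ 2) :
    {v | (G.neighborSet v).ncard ≤ 1}.ncard ≤ 2 := by
  classical
  have := Fintype.ofFinite V
  have htree := hconn.card_vert_le_card_edgeSet_add_one
  have hsum := G.sum_degrees_eq_twice_card_edges
  have hdef : ∑ v, G.degree v + #{v | G.degree v ≤ 1} ≤ ∑ _v : V, 2 := by
    rw [Finset.card_filter, ← Finset.sum_add_distrib]
    refine Finset.sum_le_sum fun v _ => ?_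
    have := ncard_neighborSet_eq_degree G v ▸ hG v
    split_ifs <;> omega
  simp only [Finset.sum_const, Finset.card_univ, smul_eq_mul] at hdef
  rw [Nat.card_eq_fintype_card, Nat.card_eq_fintype_card, ← edgeFinset_card] at htree
  simp only [ncard_neighborSet_eq_degree]
  rw [Set.ncard_eq_toFinset_card', Set.toFinset_ofPred]
  omega

lemma ConnectedComponent.ncard_le_two_of_ncard_neighborSet_le_two [Finite V]
    (hG : ∀ v, (G.neighborSet v).ncard ≤ 2) (C : G.ConnectedComponent) :
    {v | G.connectedComponentMk v = C ∧ (G.neighborSet v).ncard ≤ 1}.ncard ≤ 2 := by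
  have hset : {v | G.connectedComponentMk v = C ∧ (G.neighborSet v).ncard ≤ 1} =
      Subtype.val '' {w : C | (C.toSimpleGraph.neighborSet w).ncard ≤ 1} := by
    ext v
    simp only [C.ncard_neighborSet_toSimpleGraph]
    constructor
    · rintro ⟨hv, hdeg⟩
      exact ⟨⟨v, hv⟩, hdeg, rfl⟩
    · rintro ⟨w, hw, rfl⟩
      exact ⟨w.2, hw⟩
  rw [hset, Set.ncard_image_of_injective _ Subtype.val_injective]
  exact C.connected_toSimpleGraph.ncard_le_two_of_ncard_neighborSet_le_two fun w => by
    rw [C.ncard_neighborSet_toSimpleGraph]; exact hG w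

lemma natCard_exists_connectedComponentMk [Fintype V] [DecidableEq G.ConnectedComponent]
    (P : V → Prop) [DecidablePred P] :
    Nat.card {C : G.ConnectedComponent // ∃ v, G.connectedComponentMk v = C ∧ P v} =
      #(({v | P v} : Finset V).image G.connectedComponentMk) := by
  rw [Nat.card_eq_fintype_card, Fintype.card_subtype]
  congr 1
  ext C
  simp [and_comm]

lemma two_mul_natCard_components_le_ncard [Finite V] (hG : ∀ v, (G.neighborSet v).ncard ≤ 2) :
    2 * Nat.card {C : G.ConnectedComponent //
        ∃ v, G.connectedComponentMk v = C ∧ (G.neighborSet v).ncard = 1} ≤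
      {v | (G.neighborSet v).ncard = 1}.ncard := by
  classical
  have := Fintype.ofFinite V
  rw [natCard_exists_connectedComponentMk, Set.ncard_eq_toFinset_card', Set.toFinset_ofPred]
  refine mul_card_image_le_card _ 2 fun C hC => ?_
  obtain ⟨v, hv, rfl⟩ := mem_image.mp hC
  rw [mem_filter_univ] at hv
  obtain ⟨w, hwv, hvw, hw⟩ := exists_ne_reachable_ncard_neighborSet_eq_one hG hv
  refine one_lt_card.mpr ⟨v, ?_, w, ?_, hwv.symm⟩
  · exact mem_filter.mpr ⟨mem_filter.mpr ⟨mem_univ _, hv⟩, rfl⟩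
  · exact mem_filter.mpr
      ⟨mem_filter.mpr ⟨mem_univ _, hw⟩, (ConnectedComponent.eq.mpr hvw).symm⟩

lemma ncard_le_two_mul_natCard_components [Finite V] (hG : ∀ v, (G.neighborSet v).ncard ≤ 2) :
    {v | (G.neighborSet v).ncard ≤ 1}.ncard ≤
      2 * Nat.card {C : G.ConnectedComponent //
        ∃ v, G.connectedComponentMk v = C ∧ (G.neighborSet v).ncard ≤ 1} := by
  classical
  have := Fintype.ofFinite V
  rw [natCard_exists_connectedComponentMk, Set.ncard_eq_toFinset_card', Set.toFinset_ofPred]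
  refine card_le_mul_card_image _ 2 fun C _ => ?_
  rw [← Set.ncard_coe_finset]
  convert ConnectedComponent.ncard_le_two_of_ncard_neighborSet_le_two hG C using 2
  ext v
  simp [and_comm]

lemma natCard_pathComponents_le [Finite V] {G' : SimpleGraph V}
    (hG : ∀ v, (G.neighborSet v).ncard ≤ 2) (hG' : ∀ v, (G'.neighborSet v).ncard ≤ 2)
    {S : Set V} (hS : S.ncard ≤ 2)
    (hleaf : ∀ v, (G'.neighborSet v).ncard = 1 → (G.neighborSet v).ncard ≤ 1 ∨ v ∈ S) :
    Nat.card {C : G'.ConnectedComponent //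
        ∃ v, G'.connectedComponentMk v = C ∧ (G'.neighborSet v).ncard = 1} ≤
      Nat.card {C : G.ConnectedComponent //
        ∃ v, G.connectedComponentMk v = C ∧ (G.neighborSet v).ncard ≤ 1} + 1 := by
  have hleaves : {v | (G'.neighborSet v).ncard = 1}.ncard ≤
      {v | (G.neighborSet v).ncard ≤ 1}.ncard + S.ncard :=
    (Set.ncard_le_ncard hleaf).trans (Set.ncard_union_le _ _)
  have := two_mul_natCard_components_le_ncard hG'
  have := ncard_le_two_mul_natCard_components hG
  omega

lemma Reachable.of_forall_adj_imp {G' : SimpleGraph V} {v w : V}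
    (h : ∀ a b, G'.Reachable v a → G.Adj a b → G'.Adj a b) (hvw : G.Reachable v w) :
    G'.Reachable v w := by
  obtain ⟨p⟩ := hvw
  suffices ∀ {a b} (q : G.Walk a b), G'.Reachable v a → G'.Reachable v b from
    this p (Reachable.refl v)
  intro a b q
  induction q with
  | nil => exact id
  | cons hab _ ih => exact fun ha => ih (ha.trans (h _ _ ha hab).reachable)

lemma natCard_cycleComponents_le [Finite V] {G' : SimpleGraph V}
    (hG : ∀ v, (G.neighborSet v).ncard ≤ 2) (x : V)
    (hsub : ∀ v, ¬G'.Reachable x v → G'.neighborSet v ⊆ G.neighborSet v) :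
    Nat.card {C : G'.ConnectedComponent //
        ∀ v, G'.connectedComponentMk v = C → (G'.neighborSet v).ncard = 2} ≤
      Nat.card {C : G.ConnectedComponent //
        ∀ v, G.connectedComponentMk v = C → (G.neighborSet v).ncard = 2} + 1 := by
  set S' := {C : G'.ConnectedComponent |
    ∀ v, G'.connectedComponentMk v = C → (G'.neighborSet v).ncard = 2}
  set S := {C : G.ConnectedComponent |
    ∀ v, G.connectedComponentMk v = C → (G.neighborSet v).ncard = 2}
  have hcover : S' \ {G'.connectedComponentMk x} ⊆
      (fun C => G'.connectedComponentMk (Quot.out C)) '' S := by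
    rintro C' ⟨hC', hCx⟩
    induction C' using ConnectedComponent.ind with | h v => ?_
    have hnbr (w : V) (hvw : G'.Reachable v w) : G'.neighborSet w = G.neighborSet w := by
      refine Set.eq_of_subset_of_ncard_le (hsub w fun hxw => hCx ?_) ?_
      · exact ConnectedComponent.eq.mpr (hvw.trans hxw.symm)
      · rw [hC' w (ConnectedComponent.eq.mpr hvw.symm)]
        exact hG w
    have hreach (w : V) (hvw : G.Reachable v w) : G'.Reachable v w :=
      hvw.of_forall_adj_imp fun a b hva hab => by
        rw [← mem_neighborSet, hnbr a hva]
        exact hab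
    refine ⟨G.connectedComponentMk v, fun w hw => ?_, ?_⟩
    · have hvw := hreach w (ConnectedComponent.exact hw.symm)
      rw [← hnbr w hvw]
      exact hC' w (ConnectedComponent.eq.mpr hvw.symm)
    · exact (ConnectedComponent.eq.mpr
        (hreach _ (ConnectedComponent.exact (Quot.out_eq _).symm))).symm
  calc S'.ncard ≤ (S' \ {G'.connectedComponentMk x}).ncard + 1 := by
        simpa using Set.ncard_le_ncard_sdiff_add_ncard S' {G'.connectedComponentMk x}
    _ ≤ S.ncard + 1 := by
        gcongr
        exact (Set.ncard_le_ncard hcover).trans Set.ncard_image_le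

namespace Walk.IsPath

variable {u v w : V} {p : G.Walk u v}

lemma ncard_neighborSet_toSubgraph_of_endpoint (hp : p.IsPath) (hnil : ¬p.Nil)
    (hw : w = u ∨ w = v) : (p.toSubgraph.neighborSet w).ncard = 1 := by
  rcases hw with rfl | rfl
  · rw [hp.neighborSet_toSubgraph_startpoint hnil, Set.ncard_singleton]
  · rw [hp.neighborSet_toSubgraph_endpoint hnil, Set.ncard_singleton]

lemma neighborSet_toSubgraph_eq_empty_or_ncard_eq_two (hp : p.IsPath) (hu : w ≠ u)
    (hv : w ≠ v) :
    p.toSubgraph.neighborSet w = ∅ ∨ (p.toSubgraph.neighborSet w).ncard = 2 := by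
  by_cases hw : w ∈ p.support
  · obtain ⟨n, rfl, hn⟩ := Walk.mem_support_iff_exists_getVert.mp hw
    have hn0 : n ≠ 0 := by rintro rfl; exact hu p.getVert_zero
    have hnl : n ≠ p.length := by rintro rfl; exact hv p.getVert_length
    exact Or.inr (hp.ncard_neighborSet_toSubgraph_internal_eq_two hn0 (by omega))
  · exact Or.inl <| Set.eq_empty_of_forall_notMem fun z hz =>
      hw (Walk.mem_support_of_adj_toSubgraph hz)

end Walk.IsPath

def deleteWalksAddEdge (G : SimpleGraph V) {u₁ v₁ u₂ v₂ : V} (P₁ : G.Walk u₁ v₁)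
    (P₂ : G.Walk u₂ v₂) (x y : V) : SimpleGraph V :=
  fromEdgeSet ((G.edgeSet \ ({e | e ∈ P₁.edges} ∪ {e | e ∈ P₂.edges})) ∪ {s(x, y)})

section deleteWalksAddEdge

variable {u₁ v₁ u₂ v₂ x y w : V} (P₁ : G.Walk u₁ v₁) (P₂ : G.Walk u₂ v₂)

lemma neighborSet_deleteWalksAddEdge (v : V) :
    (G.deleteWalksAddEdge P₁ P₂ x y).neighborSet v =
      G.neighborSet v \ (P₁.toSubgraph.neighborSet v ∪ P₂.toSubgraph.neighborSet v) ∪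
        (edge x y).neighborSet v := by
  ext w
  simp only [deleteWalksAddEdge, mem_neighborSet, fromEdgeSet_adj, edge_adj, Set.mem_union,
    Set.mem_sdiff, Subgraph.mem_neighborSet, Walk.adj_toSubgraph_iff_mem_edges, mem_edgeSet,
    Set.mem_ofPred_eq, Set.mem_singleton_iff, Sym2.eq_iff]
  constructor
  · rintro ⟨h | h, hne⟩
    · exact Or.inl ⟨h.1, h.2⟩
    · exact Or.inr ⟨h, hne⟩
  · rintro (h | h)
    · exact ⟨Or.inl ⟨h.1, h.2⟩, h.1.ne⟩
    · exact ⟨Or.inr h.1, h.2⟩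

lemma deleteWalksAddEdge_comm :
    G.deleteWalksAddEdge P₂ P₁ y x = G.deleteWalksAddEdge P₁ P₂ x y := by
  rw [deleteWalksAddEdge, deleteWalksAddEdge, Set.union_comm {e | e ∈ P₂.edges}, Sym2.eq_swap]

lemma neighborSet_deleteWalksAddEdge_subset (hwx : w ≠ x) (hwy : w ≠ y) :
    (G.deleteWalksAddEdge P₁ P₂ x y).neighborSet w ⊆ G.neighborSet w := by
  rw [neighborSet_deleteWalksAddEdge]
  rintro z (hz | hz)
  · exact hz.1
  · simp_all [edge_adj]

variable [Finite V]

lemma ncard_neighborSet_deleteWalksAddEdge_left (hP₁ : P₁.IsPath) (hnil : ¬P₁.Nil)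
    (hx : x = u₁ ∨ x = v₁) (hxP₂ : x ∉ P₂.support) (hxy : ¬G.Adj x y) (hne : x ≠ y) :
    ((G.deleteWalksAddEdge P₁ P₂ x y).neighborSet x).ncard = (G.neighborSet x).ncard := by
  have hP₂x : P₂.toSubgraph.neighborSet x = ∅ :=
    Set.eq_empty_of_forall_notMem fun z hz => hxP₂ (Walk.mem_support_of_adj_toSubgraph hz)
  have hedge : (edge x y).neighborSet x = {y} := by
    ext z
    simp only [mem_neighborSet, edge_adj, Set.mem_singleton_iff]
    grind
  have hsub := P₁.toSubgraph.neighborSet_subset x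
  have hy : y ∉ G.neighborSet x \ P₁.toSubgraph.neighborSet x := fun h => hxy h.1
  rw [neighborSet_deleteWalksAddEdge, hP₂x, Set.union_empty, hedge, Set.union_singleton,
    Set.ncard_insert_of_notMem hy, Set.ncard_sdiff hsub,
    hP₁.ncard_neighborSet_toSubgraph_of_endpoint hnil hx]
  have := Set.ncard_le_ncard hsub
  rw [hP₁.ncard_neighborSet_toSubgraph_of_endpoint hnil hx] at this
  omega

lemma ncard_neighborSet_deleteWalksAddEdge_right (hP₂ : P₂.IsPath) (hnil : ¬P₂.Nil)
    (hy : y = u₂ ∨ y = v₂) (hyP₁ : y ∉ P₁.support) (hxy : ¬G.Adj x y) (hne : x ≠ y) :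
    ((G.deleteWalksAddEdge P₁ P₂ x y).neighborSet y).ncard = (G.neighborSet y).ncard := by
  rw [← deleteWalksAddEdge_comm]
  exact ncard_neighborSet_deleteWalksAddEdge_left P₂ P₁ hP₂ hnil hy hyP₁
    (fun h => hxy h.symm) hne.symm

lemma neighborSet_deleteWalksAddEdge_eq_empty_or_eq (hP₁ : P₁.IsPath) (hP₂ : P₂.IsPath)
    (hw : (G.neighborSet w).ncard ≤ 2) (hwx : w ≠ x) (hwy : w ≠ y) (hu₁ : w ≠ u₁)
    (hv₁ : w ≠ v₁) (hu₂ : w ≠ u₂) (hv₂ : w ≠ v₂) :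
    (G.deleteWalksAddEdge P₁ P₂ x y).neighborSet w = ∅ ∨
      (G.deleteWalksAddEdge P₁ P₂ x y).neighborSet w = G.neighborSet w := by
  have hedge : (edge x y).neighborSet w = ∅ := by
    ext z
    simp [edge_adj, hwx, hwy]
  -- a path through the inner vertex `w` uses both of its at most two edges
  have hall (H : G.Subgraph) (hH : H.neighborSet w = ∅ ∨ (H.neighborSet w).ncard = 2) :
      H.neighborSet w = ∅ ∨ H.neighborSet w = G.neighborSet w :=
    hH.imp_right fun h =>
      Set.eq_of_subset_of_ncard_le (H.neighborSet_subset w) (by rw [h]; exact hw)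
  rw [neighborSet_deleteWalksAddEdge, hedge, Set.union_empty]
  have h₁ := hall _ (hP₁.neighborSet_toSubgraph_eq_empty_or_ncard_eq_two hu₁ hv₁)
  have h₂ := hall _ (hP₂.neighborSet_toSubgraph_eq_empty_or_ncard_eq_two hu₂ hv₂)
  rcases h₁ with h₁ | h₁ <;> rcases h₂ with h₂ | h₂ <;> simp [h₁, h₂]

lemma ncard_neighborSet_le_one_or_mem_of_deleteWalksAddEdge
    (hG : ∀ v, (G.neighborSet v).ncard ≤ 2) (hP₁ : P₁.IsPath) (hP₂ : P₂.IsPath)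
    (hdx : ((G.deleteWalksAddEdge P₁ P₂ x y).neighborSet x).ncard =
      (G.neighborSet x).ncard)
    (hdy : ((G.deleteWalksAddEdge P₁ P₂ x y).neighborSet y).ncard =
      (G.neighborSet y).ncard)
    (hw : ((G.deleteWalksAddEdge P₁ P₂ x y).neighborSet w).ncard = 1) :
    (G.neighborSet w).ncard ≤ 1 ∨ w ∈ ({u₁, v₁} \ {x} ∪ {u₂, v₂} \ {y} : Set V) := by
  rcases eq_or_ne w x with rfl | hwx
  · omega
  rcases eq_or_ne w y with rfl | hwy
  · omega
  by_cases hend : w = u₁ ∨ w = v₁ ∨ w = u₂ ∨ w = v₂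
  · right
    simp only [Set.mem_union, Set.mem_sdiff, Set.mem_insert_iff, Set.mem_singleton_iff]
    tauto
  push Not at hend
  obtain ⟨hu₁, hv₁, hu₂, hv₂⟩ := hend
  rcases neighborSet_deleteWalksAddEdge_eq_empty_or_eq P₁ P₂ hP₁ hP₂ (hG w) hwx hwy
    hu₁ hv₁ hu₂ hv₂ with h | h
  · rw [h, Set.ncard_empty] at hw
    omega
  · rw [h] at hw
    omega

end deleteWalksAddEdge

end SimpleGraph

open SimpleGraph

/-- Let `G` be a vertex-disjoint union of paths and cycles (every vertex has degree at most
2), with `p` components that are paths (components containing a vertex of degree at most 1)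
and `c` components that are cycles (components all of whose vertices have degree 2).
Let `P₁, P₂` be vertex-disjoint non-degenerate subpaths of `G`, let `x` be an endpoint of
`P₁` and `y` an endpoint of `P₂`, and assume `{x, y}` is not an edge of `G`.  Then the graph
obtained from `G` by deleting the edges of `P₁` and `P₂` and adding the edge `{x, y}` is a
vertex-disjoint union of paths and cycles, with at most `p + 1` components that are
non-degenerate paths (components containing a vertex of degree exactly 1) and at most
`c + 1` components that are cycles. -/
theorem stmt11 {V : Type*} [Fintype V] (G : SimpleGraph V)
    (hG : ∀ v : V, (G.neighborSet v).ncard ≤ 2)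
    (p c : ℕ)
    (hp : p = Nat.card {comp : G.ConnectedComponent //
        ∃ v, G.connectedComponentMk v = comp ∧ (G.neighborSet v).ncard ≤ 1})
    (hc : c = Nat.card {comp : G.ConnectedComponent //
        ∀ v, G.connectedComponentMk v = comp → (G.neighborSet v).ncard = 2})
    {u₁ v₁ u₂ v₂ : V} (P₁ : G.Walk u₁ v₁) (P₂ : G.Walk u₂ v₂)
    (hP₁ : P₁.IsPath) (hP₂ : P₂.IsPath)
    (hl₁ : 1 ≤ P₁.length) (hl₂ : 1 ≤ P₂.length)
    (hdisj : Disjoint {w : V | w ∈ P₁.support} {w : V | w ∈ P₂.support})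
    (x y : V) (hx : x = u₁ ∨ x = v₁) (hy : y = u₂ ∨ y = v₂)
    (hxy : ¬ G.Adj x y) :
    ∀ G' : SimpleGraph V,
      G' = SimpleGraph.fromEdgeSet
        ((G.edgeSet \ ({e | e ∈ P₁.edges} ∪ {e | e ∈ P₂.edges})) ∪ {s(x, y)}) →
      (∀ v : V, (G'.neighborSet v).ncard ≤ 2) ∧
      Nat.card {comp : G'.ConnectedComponent //
          ∃ v, G'.connectedComponentMk v = comp ∧ (G'.neighborSet v).ncard = 1}
        ≤ p + 1 ∧
      Nat.card {comp : G'.ConnectedComponent //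
          ∀ v, G'.connectedComponentMk v = comp → (G'.neighborSet v).ncard = 2}
        ≤ c + 1 := by
  rintro G' rfl
  have hxP₁ : x ∈ P₁.support := by rcases hx with rfl | rfl <;> simp
  have hyP₂ : y ∈ P₂.support := by rcases hy with rfl | rfl <;> simp
  have hxP₂ : x ∉ P₂.support := Set.disjoint_left.mp hdisj hxP₁
  have hyP₁ : y ∉ P₁.support := Set.disjoint_right.mp hdisj hyP₂
  have hne : x ≠ y := fun h => hxP₂ (h ▸ hyP₂)
  have hdx := ncard_neighborSet_deleteWalksAddEdge_left P₁ P₂ hP₁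
    (Walk.not_nil_iff_lt_length.mpr hl₁) hx hxP₂ hxy hne
  have hdy := ncard_neighborSet_deleteWalksAddEdge_right P₁ P₂ hP₂
    (Walk.not_nil_iff_lt_length.mpr hl₂) hy hyP₁ hxy hne
  have hdeg (v : V) : ((G.deleteWalksAddEdge P₁ P₂ x y).neighborSet v).ncard ≤ 2 := by
    rcases eq_or_ne v x with rfl | hvx
    · exact hdx ▸ hG v
    rcases eq_or_ne v y with rfl | hvy
    · exact hdy ▸ hG v
    exact (Set.ncard_le_ncard (neighborSet_deleteWalksAddEdge_subset P₁ P₂ hvx hvy)).trans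
      (hG v)
  refine ⟨hdeg, ?_, ?_⟩
  · have hS := (Set.ncard_union_le _ _).trans (add_le_add
      (Set.ncard_pair_sdiff_singleton_le_one hx) (Set.ncard_pair_sdiff_singleton_le_one hy))
    exact hp ▸ natCard_pathComponents_le hG hdeg hS fun w =>
      ncard_neighborSet_le_one_or_mem_of_deleteWalksAddEdge P₁ P₂ hG hP₁ hP₂ hdx hdy
  · refine hc ▸ natCard_cycleComponents_le hG x fun v hv =>
      neighborSet_deleteWalksAddEdge_subset P₁ P₂ ?_ ?_
    · rintro rfl
      exact hv (Reachable.refl _)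
    · rintro rfl
      exact hv ((fromEdgeSet_adj _).mpr ⟨Or.inr rfl, hne⟩).reachable
end

section
/- For every real α with 0 < α < √2 − 1 there exists a constant c < 1 such that the following holds for all sufficiently large even n. Let H_n be the complete bipartite graph on [n] with parts A and B where |A| = ⌈αn⌉ and |B| = n − ⌈αn⌉. Then the probability that H_n ∪ G_{n,1} contains a Hamilton cycle is at most c. -/
open Filter

/-- A simple graph is `d`-regular: every vertex has exactly `d` neighbours. -/
def IsRegularGraph {n : ℕ} (G : SimpleGraph (Fin n)) (d : ℕ) : Prop :=
  ∀ v : Fin n, (G.neighborSet v).ncard = d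

/-- The probability, under the uniform distribution on the (finite) set of `d`-regular
simple graphs on the vertex set `[n] = Fin n`, that the random graph satisfies `p`. -/
noncomputable def probReg (n d : ℕ) (p : SimpleGraph (Fin n) → Prop) : ℝ :=
  (Nat.card {G : SimpleGraph (Fin n) // IsRegularGraph G d ∧ p G} : ℝ) /
    (Nat.card {G : SimpleGraph (Fin n) // IsRegularGraph G d} : ℝ)

/-- The complete bipartite graph on `Fin n` with parts `{v : ↑v < a}` and `{v : ↑v ≥ a}`. -/
def completeBip (n a : ℕ) : SimpleGraph (Fin n) where
  Adj u v := ((u : ℕ) < a) ≠ ((v : ℕ) < a)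
  symm := ⟨fun _ _ h => Ne.symm h⟩
  loopless := ⟨fun _ h => h rfl⟩

/-!
A Hamilton cycle of `completeBip n a ⊔ M` passes through all `n - a` vertices of the large part
`B`, and at most `a` of its edges can leave `B`, since they end in the small part. So at least
`n - 2a` of its edges lie inside `B`, and these are edges of the matching `M`. Every edge lies in a
`1/(n-1)` fraction of the perfect matchings of `[n]`, so `M` has on average at most
`C(n-a+1, 2)/(n-1) ≈ (1-α)²n/2` edges inside `B`. Markov's inequality then bounds the probability by
about `(1-α)²/(2(1-2α))`, which is less than `1` exactly when `α < √2 - 1`.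
-/

open Finset SimpleGraph

namespace SimpleGraph.Walk

variable {V : Type*} [Fintype V] [DecidableEq V] {G : SimpleGraph V} {v : V} {p : G.Walk v v}

lemma IsHamiltonianCycle.coe_support_tail (hp : p.IsHamiltonianCycle) :
    (p.support.tail : Multiset V) = univ.val := by
  ext x
  rw [Multiset.coe_count, (isHamiltonianCycle_iff_isCycle_and_support_count_tail_eq_one.mp hp).2,
    Multiset.count_eq_one_of_mem univ.nodup (mem_univ x)]

lemma IsHamiltonianCycle.coe_support_dropLast (hp : p.IsHamiltonianCycle) :
    (p.support.dropLast : Multiset V) = univ.val := by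
  have hsupp : p.support.dropLast ++ [v] = v :: p.support.tail := by
    rw [cons_tail_support]
    simpa only [getLast_support] using List.dropLast_append_getLast (l := p.support) (by simp)
  rw [← hp.coe_support_tail, Multiset.coe_eq_coe, ← List.perm_cons v, ← hsupp]
  exact (List.perm_append_singleton _ _).symm

lemma IsHamiltonianCycle.card_sub_card_compl_le [Fintype G.edgeSet] (hp : p.IsHamiltonianCycle)
    (s : Finset V) : #s - #sᶜ ≤ #(G.edgeFinset ∩ s.sym2) := by
  -- Each vertex is the tail of exactly one dart and the head of exactly one dart: of the `#s`
  -- darts leaving a vertex of `s`, at most `#sᶜ` end outside `s`, and the others are distinct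
  -- edges inside `s`.
  set D : Multiset G.Dart := ↑p.darts
  have hfst : D.countP (·.fst ∈ s) = #s := by
    rw [Multiset.countP_eq_card_filter, ← Multiset.countP_map (·.fst) D (· ∈ s), Multiset.map_coe,
      map_fst_darts, hp.coe_support_dropLast, Multiset.countP_eq_card_filter, ← filter_val,
      card_val, filter_univ_mem]
  have hsnd : D.countP (·.snd ∈ sᶜ) = #sᶜ := by
    rw [Multiset.countP_eq_card_filter, ← Multiset.countP_map (·.snd) D (· ∈ sᶜ), Multiset.map_coe,
      map_snd_darts, hp.coe_support_tail, Multiset.countP_eq_card_filter, ← filter_val,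
      card_val, filter_univ_mem]
  have hinside : D.countP (fun d => d.fst ∈ s ∧ d.snd ∈ s) ≤ #(G.edgeFinset ∩ s.sym2) := by
    have hnodup : ((D.filter (fun d => d.fst ∈ s ∧ d.snd ∈ s)).map (·.edge)).Nodup :=
      Multiset.nodup_of_le (Multiset.map_le_map (Multiset.filter_le _ _))
        (Multiset.coe_nodup.mpr hp.edges_nodup)
    rw [Multiset.countP_eq_card_filter, ← Multiset.card_map (·.edge),
      ← Multiset.toFinset_card_of_nodup hnodup]
    refine card_le_card fun e he => ?_
    simp only [Multiset.mem_toFinset, Multiset.mem_map, Multiset.mem_filter] at he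
    obtain ⟨d, ⟨-, hd⟩, rfl⟩ := he
    simpa [d.edge_mem, Dart.edge] using hd
  have hsplit := Multiset.countP_eq_countP_filter_add D (·.fst ∈ s) (·.snd ∈ s)
  have hout : ((D.filter (·.snd ∉ s)).countP (·.fst ∈ s)) ≤ #sᶜ :=
    hsnd ▸ (Multiset.countP_le_card _ _).trans (by simp [Multiset.countP_eq_card_filter])
  simp only [Multiset.countP_filter] at hsplit hout
  omega

end SimpleGraph.Walk

lemma Fin.card_filter_le_val (n a : ℕ) : #{x : Fin n | a ≤ (x : ℕ)} = n - a := by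
  rw [← card_map Fin.valEmbedding, ← Nat.card_Ico a n]
  congr 1
  ext y
  simp only [Finset.mem_map, mem_filter, mem_univ, true_and, Fin.valEmbedding_apply, mem_Ico]
  exact ⟨by rintro ⟨x, hx, rfl⟩; omega, fun h => ⟨⟨y, h.2⟩, h.1, rfl⟩⟩

open scoped Classical in
lemma completeBip_sup_edgeFinset_inter_sym2_subset (n a : ℕ) (G : SimpleGraph (Fin n)) :
    (completeBip n a ⊔ G).edgeFinset ∩ ({x | a ≤ (x : ℕ)} : Finset (Fin n)).sym2 ⊆
      G.edgeFinset ∩ ({x | a ≤ (x : ℕ)} : Finset (Fin n)).sym2 := by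
  intro e
  induction e using Sym2.ind with
  | _ u v =>
    simp only [mem_inter, mem_edgeFinset, mem_edgeSet, sup_adj, mk_mem_sym2_iff, mem_filter,
      mem_univ, true_and, and_imp]
    intro hadj hu hv
    refine ⟨hadj.resolve_left fun h => h ?_, hu, hv⟩
    rw [eq_iff_iff]
    omega

section RegularGraphs

open scoped Classical

variable {n : ℕ}

noncomputable def regularGraphs (n d : ℕ) : Finset (SimpleGraph (Fin n)) := {G | IsRegularGraph G d}

lemma IsRegularGraph.comap_perm {G : SimpleGraph (Fin n)} {d : ℕ} (h : IsRegularGraph G d)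
    (σ : Equiv.Perm (Fin n)) : IsRegularGraph (G.comap σ) d := fun x => by
  rw [neighborSet_comap, Set.ncard_preimage_of_injective_subset_range σ.injective (by simp), h]

lemma card_regularGraphs_adj_eq (d : ℕ) {u v u' v' : Fin n} (h : u ≠ v) (h' : u' ≠ v') :
    #{G ∈ regularGraphs n d | G.Adj u v} = #{G ∈ regularGraphs n d | G.Adj u' v'} := by
  obtain ⟨σ, rfl, rfl⟩ := MulAction.is_two_pretransitive_iff.mp
    (Equiv.Perm.isMultiplyPretransitive (Fin n) 2) h h'
  refine card_equiv σ.simpleGraph fun G => ?_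
  simp only [regularGraphs, mem_filter, mem_univ, true_and, Equiv.simpleGraph_apply, comap_adj,
    Equiv.Perm.smul_def, Equiv.symm_apply_apply]
  refine ⟨fun ⟨hG, hadj⟩ => ⟨hG.comap_perm _, hadj⟩, fun ⟨hG, hadj⟩ => ⟨?_, hadj⟩⟩
  simpa using hG.comap_perm σ

lemma card_regularGraphs_one_eq {u v : Fin n} (huv : u ≠ v) :
    #(regularGraphs n 1) = (n - 1) * #{G ∈ regularGraphs n 1 | G.Adj u v} := by
  have hdeg : ∀ G ∈ regularGraphs n 1, #{w | G.Adj u w} = 1 := fun G hG => by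
    rw [← (mem_filter.mp hG).2 u, ← Set.ncard_coe_finset]
    congr 1; ext w; simp
  calc #(regularGraphs n 1)
      _ = ∑ G ∈ regularGraphs n 1, #{w | G.Adj u w} := by
        rw [card_eq_sum_ones]
        exact (sum_congr rfl hdeg).symm
      _ = ∑ w, #{G ∈ regularGraphs n 1 | G.Adj u w} := by
        simpa only [bipartiteAbove, bipartiteBelow] using
          sum_card_bipartiteAbove_eq_sum_card_bipartiteBelow (fun G w => G.Adj u w)
            (s := regularGraphs n 1) (t := univ)
      _ = ∑ w ∈ univ.erase u, #{G ∈ regularGraphs n 1 | G.Adj u w} :=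
        (sum_erase _ (by simp)).symm
      _ = (n - 1) * #{G ∈ regularGraphs n 1 | G.Adj u v} := by
        rw [sum_congr rfl fun w hw => card_regularGraphs_adj_eq 1 (ne_of_mem_erase hw).symm huv,
          sum_const, card_erase_of_mem (mem_univ _), card_univ, Fintype.card_fin, smul_eq_mul]

lemma mul_sum_card_edgeFinset_inter_sym2_le (s : Finset (Fin n)) :
    (n - 1) * ∑ G ∈ regularGraphs n 1, #(G.edgeFinset ∩ s.sym2) ≤
      #s.sym2 * #(regularGraphs n 1) := by
  have hswap : ∑ G ∈ regularGraphs n 1, #(G.edgeFinset ∩ s.sym2) =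
      ∑ e ∈ s.sym2, #{G ∈ regularGraphs n 1 | e ∈ G.edgeFinset} := by
    simpa only [bipartiteAbove, bipartiteBelow, filter_mem_eq_inter, inter_comm] using
      sum_card_bipartiteAbove_eq_sum_card_bipartiteBelow (fun G e => e ∈ G.edgeFinset)
        (s := regularGraphs n 1) (t := s.sym2)
  have hedge : ∀ e : Sym2 (Fin n), (n - 1) * #{G ∈ regularGraphs n 1 | e ∈ G.edgeFinset} ≤
      #(regularGraphs n 1) := by
    intro e
    induction e using Sym2.ind with
    | _ u v =>
      by_cases huv : u = v
      · simp [huv]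
      · simp only [mem_edgeFinset, mem_edgeSet]
        exact (card_regularGraphs_one_eq huv).ge
  calc (n - 1) * ∑ G ∈ regularGraphs n 1, #(G.edgeFinset ∩ s.sym2)
      _ = ∑ e ∈ s.sym2, (n - 1) * #{G ∈ regularGraphs n 1 | e ∈ G.edgeFinset} := by
        rw [hswap, mul_sum]
      _ ≤ ∑ _e ∈ s.sym2, #(regularGraphs n 1) := sum_le_sum fun e _ => hedge e
      _ = #s.sym2 * #(regularGraphs n 1) := by rw [sum_const, smul_eq_mul]

end RegularGraphs

open scoped Classical in
lemma mul_card_hamiltonian_le (n a : ℕ) :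
    (n - 1) * (n - 2 * a) * #{G ∈ regularGraphs n 1 |
        ∃ (v : Fin n) (w : (completeBip n a ⊔ G).Walk v v), w.IsHamiltonianCycle} ≤
      (n - a + 1).choose 2 * #(regularGraphs n 1) := by
  set B : Finset (Fin n) := {x | a ≤ (x : ℕ)}
  set X : SimpleGraph (Fin n) → ℕ := fun G => #(G.edgeFinset ∩ B.sym2)
  set H := {G ∈ regularGraphs n 1 |
    ∃ (v : Fin n) (w : (completeBip n a ⊔ G).Walk v v), w.IsHamiltonianCycle}
  have hham : ∀ G ∈ H, n - 2 * a ≤ X G := by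
    intro G hG
    obtain ⟨-, v, w, hw⟩ := mem_filter.mp hG
    have hB : #B = n - a := Fin.card_filter_le_val n a
    have hBc : #Bᶜ = n - #B := by rw [card_compl, Fintype.card_fin]
    calc n - 2 * a ≤ #B - #Bᶜ := by omega
      _ ≤ #((completeBip n a ⊔ G).edgeFinset ∩ B.sym2) := hw.card_sub_card_compl_le B
      _ ≤ X G := card_le_card (completeBip_sup_edgeFinset_inter_sym2_subset n a G)
  calc (n - 1) * (n - 2 * a) * #H
      _ ≤ (n - 1) * ∑ G ∈ regularGraphs n 1, X G := by
        rw [mul_assoc, mul_comm (n - 2 * a), ← smul_eq_mul _ (n - 2 * a)]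
        exact Nat.mul_le_mul_left _ ((card_nsmul_le_sum _ _ _ hham).trans
          (sum_le_sum_of_subset (filter_subset _ _)))
      _ ≤ #B.sym2 * #(regularGraphs n 1) := mul_sum_card_edgeFinset_inter_sym2_le B
      _ = (n - a + 1).choose 2 * #(regularGraphs n 1) := by
        rw [card_sym2, Fin.card_filter_le_val]

open scoped Classical in
lemma probReg_hamiltonian_le {n a : ℕ} (ha : 2 * a < n) (hn : 2 ≤ n) :
    probReg n 1 (fun G => ∃ (v : Fin n) (w : (completeBip n a ⊔ G).Walk v v),
      w.IsHamiltonianCycle) ≤ ((n : ℝ) - a + 1) * (n - a) / (2 * ((n - 1) * (n - 2 * a))) := by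
  have hcount := mul_card_hamiltonian_le n a
  rw [probReg, Nat.card_eq_fintype_card, Fintype.card_subtype, Nat.card_eq_fintype_card,
    Fintype.card_subtype, ← filter_filter]
  change (#{G ∈ regularGraphs n 1 | _} : ℝ) / #(regularGraphs n 1) ≤ _
  set H := #{G ∈ regularGraphs n 1 |
    ∃ (v : Fin n) (w : (completeBip n a ⊔ G).Walk v v), w.IsHamiltonianCycle}
  have ha' : (2 * a : ℝ) < n := by exact_mod_cast ha
  have hn' : (2 : ℝ) ≤ n := by exact_mod_cast hn
  rcases (#(regularGraphs n 1)).eq_zero_or_pos with h0 | hpos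
  · rw [h0, Nat.cast_zero, div_zero]
    apply div_nonneg <;> nlinarith
  · have hR : ((n : ℝ) - 1) * (n - 2 * a) * H ≤
        ((n : ℝ) - a + 1) * (n - a) / 2 * #(regularGraphs n 1) := by
      have := (Nat.cast_le (α := ℝ)).mpr hcount
      push_cast [Nat.cast_sub (by omega : 1 ≤ n), Nat.cast_sub ha.le, Nat.cast_choose_two,
        Nat.cast_sub (by omega : a ≤ n)] at this
      rwa [add_sub_cancel_right] at this
    rw [div_le_div_iff₀ (by positivity) (by nlinarith)]
    nlinarith

open Topology

lemma tendsto_natCeil_mul_div {α : ℝ} (h0 : 0 ≤ α) :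
    Tendsto (fun n : ℕ => (⌈α * n⌉₊ : ℝ) / n) atTop (𝓝 α) :=
  (tendsto_nat_ceil_mul_div_atTop h0).comp tendsto_natCast_atTop_atTop

lemma tendsto_hamiltonian_bound {α : ℝ} (h0 : 0 ≤ α) (h1 : α < 1 / 2) :
    Tendsto (fun n : ℕ => ((n : ℝ) - ⌈α * n⌉₊ + 1) * (n - ⌈α * n⌉₊) /
      (2 * ((n - 1) * (n - 2 * ⌈α * n⌉₊)))) atTop (𝓝 ((1 - α) ^ 2 / (2 * (1 - 2 * α)))) := by
  set r : ℕ → ℝ := fun n => ⌈α * n⌉₊ / n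
  have hr : Tendsto r atTop (𝓝 α) := tendsto_natCeil_mul_div h0
  have hinv : Tendsto (fun n : ℕ => (1 : ℝ) / n) atTop (𝓝 0) := tendsto_one_div_atTop_nhds_zero_nat
  have hnum : Tendsto (fun n => (1 - r n + 1 / n) * (1 - r n)) atTop (𝓝 ((1 - α) ^ 2)) := by
    simpa [sq] using ((tendsto_const_nhds.sub hr).add hinv).mul (tendsto_const_nhds.sub hr)
  have hden : Tendsto (fun n => 2 * ((1 - 1 / n) * (1 - 2 * r n))) atTop
      (𝓝 (2 * (1 - 2 * α))) := by
    simpa using (((tendsto_const_nhds (x := (1 : ℝ))).sub hinv).mul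
      ((tendsto_const_nhds (x := (1 : ℝ))).sub (hr.const_mul 2))).const_mul 2
  refine (hnum.div hden (by linarith)).congr' ((eventually_ne_atTop 0).mono fun n hn => ?_)
  have hn' : (n : ℝ) ≠ 0 := by exact_mod_cast hn
  simp only [r, Pi.div_apply]
  field_simp

lemma eventually_two_mul_ceil_lt {α : ℝ} (h0 : 0 ≤ α) (h1 : α < 1 / 2) :
    ∀ᶠ n : ℕ in atTop, 2 * ⌈α * n⌉₊ < n := by
  filter_upwards [(tendsto_natCeil_mul_div h0).eventually_lt_const h1, eventually_gt_atTop 0]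
    with n hlt hn
  rw [div_lt_iff₀ (by positivity)] at hlt
  exact_mod_cast (by linarith : (2 * ⌈α * n⌉₊ : ℝ) < n)

/-- For every `0 < α < √2 − 1` there is a constant `c < 1` such that, for all sufficiently
large even `n`, if `H` is the complete bipartite graph on `[n]` with parts of sizes `⌈αn⌉`
and `n − ⌈αn⌉`, then the probability that `H ∪ G_{n,1}` is Hamiltonian is at most `c`. -/
theorem stmt13 (α : ℝ) (h0 : 0 < α) (h1 : α < Real.sqrt 2 - 1) :
    ∃ c : ℝ, c < 1 ∧ ∃ n₀ : ℕ, ∀ m : ℕ, n₀ ≤ 2 * m →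
      probReg (2 * m) 1 (fun G =>
        ∃ (v : Fin (2 * m))
          (w : (completeBip (2 * m) ⌈α * ((2 * m : ℕ) : ℝ)⌉₊ ⊔ G).Walk v v),
          w.IsHamiltonianCycle) ≤ c := by
  have hsqrt : Real.sqrt 2 < 3 / 2 := by rw [Real.sqrt_lt' (by norm_num)]; norm_num
  have hα : α < 1 / 2 := by linarith
  have hρ : (1 - α) ^ 2 / (2 * (1 - 2 * α)) < 1 := by
    rw [div_lt_one (by linarith)]
    nlinarith [Real.sq_sqrt (show (0 : ℝ) ≤ 2 by norm_num)]
  obtain ⟨c, hρc, hc1⟩ := exists_between hρ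
  obtain ⟨n₀, hn₀⟩ := eventually_atTop.mp <|
    ((tendsto_hamiltonian_bound h0.le hα).eventually_lt_const hρc).and
      ((eventually_two_mul_ceil_lt h0.le hα).and (eventually_ge_atTop 2))
  refine ⟨c, hc1, n₀, fun m hm => ?_⟩
  obtain ⟨hbound, ha, hn⟩ := hn₀ (2 * m) hm
  exact (probReg_hamiltonian_le ha hn).trans hbound.le
end

section
/- Let A and B be disjoint nonempty finite vertex sets, let H be the complete bipartite graph with parts A and B, and let G be a perfect matching on A ∪ B. If the graph H ∪ G contains a Hamilton cycle, then the number of edges of G with both endpoints in B is at least |B| − |A|. -/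
/-!
Follow the Hamilton cycle and look at the darts entering the vertices of `B`: there are `|B|` of
them, since the cycle enters every vertex once. At most `|A|` of them start in `A`, since the
cycle also leaves every vertex once; the others join two vertices of `B`, and such an edge of
`H ∪ G` must be an edge of the matching `G`, as `H` is bipartite.
-/

namespace SimpleGraph.Walk

variable {V : Type*} {G : SimpleGraph V}

lemma IsTrail.injOn_edge_darts {u v : V} {p : G.Walk u v} (hp : p.IsTrail) :
    {d | d ∈ p.darts}.InjOn Dart.edge :=
  List.inj_on_of_nodup_map hp.edges_nodup

lemma IsCycle.injOn_fst_darts {u : V} {p : G.Walk u u} (hp : p.IsCycle) :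
    {d | d ∈ p.darts}.InjOn (·.fst) :=
  List.inj_on_of_nodup_map (p.map_fst_darts ▸ hp.nodup_dropLast_support)

lemma IsHamiltonianCycle.exists_mem_darts_snd_eq [DecidableEq V] {u : V} {p : G.Walk u u}
    (hp : p.IsHamiltonianCycle) (v : V) : ∃ d ∈ p.darts, d.snd = v := by
  have hv : v ∈ p.support.tail :=
    p.support_tail_of_not_nil hp.not_nil ▸ hp.isHamiltonian_tail.mem_support v
  simpa [← p.map_snd_darts] using hv

lemma IsHamiltonianCycle.ncard_le_ncard_compl_add [DecidableEq V] {u : V} {p : G.Walk u u}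
    (hp : p.IsHamiltonianCycle) (s : Set V) :
    s.ncard ≤ sᶜ.ncard + {e | e ∈ p.edges ∧ ∀ v ∈ e, v ∈ s}.ncard := by
  have := hp.finite
  set D : Set G.Dart := {d | d ∈ p.darts}
  have hD : D.Finite := p.darts.finite_toSet
  have hentering : s ⊆ (·.snd) '' {d ∈ D | d.snd ∈ s} := fun v hv ↦ by
    obtain ⟨d, hd, rfl⟩ := hp.exists_mem_darts_snd_eq v
    exact ⟨d, ⟨hd, hv⟩, rfl⟩
  have hsplit : {d ∈ D | d.snd ∈ s} ⊆ {d ∈ D | d.fst ∈ sᶜ} ∪ {d ∈ D | d.fst ∈ s ∧ d.snd ∈ s} :=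
    fun d ⟨hd, hsnd⟩ ↦ (em (d.fst ∈ s)).elim (fun h ↦ .inr ⟨hd, h, hsnd⟩) (fun h ↦ .inl ⟨hd, h⟩)
  have hleaving : {d ∈ D | d.fst ∈ sᶜ}.ncard ≤ sᶜ.ncard :=
    Set.ncard_le_ncard_of_injOn _ (fun d hd ↦ hd.2) (hp.isCycle.injOn_fst_darts.mono fun _ h ↦ h.1)
  have hinside : {d ∈ D | d.fst ∈ s ∧ d.snd ∈ s}.ncard ≤
      {e | e ∈ p.edges ∧ ∀ v ∈ e, v ∈ s}.ncard := by
    refine Set.ncard_le_ncard_of_injOn Dart.edge (fun d ⟨hd, hfst, hsnd⟩ ↦ ⟨?_, ?_⟩)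
      (hp.isTrail.injOn_edge_darts.mono fun _ h ↦ h.1)
    · exact List.mem_map_of_mem hd
    · intro v hv
      rcases Sym2.mem_iff.1 (show v ∈ s(d.fst, d.snd) from hv) with rfl | rfl <;> assumption
  calc s.ncard ≤ {d ∈ D | d.snd ∈ s}.ncard :=
        (Set.ncard_le_ncard hentering).trans (Set.ncard_image_le (hD.subset fun _ h ↦ h.1))
    _ ≤ {d ∈ D | d.fst ∈ sᶜ}.ncard + {d ∈ D | d.fst ∈ s ∧ d.snd ∈ s}.ncard :=
        (Set.ncard_le_ncard hsplit (hD.subset fun _ h ↦ h.elim (·.1) (·.1))).trans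
          (Set.ncard_union_le _ _)
    _ ≤ _ := add_le_add hleaving hinside

end SimpleGraph.Walk

open SimpleGraph

theorem stmt14_general {V : Type*} [DecidableEq V] (A B : Set V)
    (hdisj : Disjoint A B) (hunion : A ∪ B = Set.univ)
    (H G : SimpleGraph V)
    (hH : ∀ u v : V, H.Adj u v ↔ ((u ∈ A ∧ v ∈ B) ∨ (u ∈ B ∧ v ∈ A)))
    (ham : ∃ (v : V) (w : (H ⊔ G).Walk v v), w.IsHamiltonianCycle) :
    (B.ncard : ℤ) - (A.ncard : ℤ) ≤
      ({e ∈ G.edgeSet | ∀ v ∈ e, v ∈ B}.ncard : ℤ) := by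
  obtain ⟨v, w, hw⟩ := ham
  have := hw.finite
  have hA : A = Bᶜ := IsCompl.eq_compl ⟨hdisj, codisjoint_iff.2 hunion⟩
  have hH_not_inside_B : ∀ e ∈ H.edgeSet, ¬∀ v ∈ e, v ∈ B := by
    rintro ⟨x, y⟩ hxy hB
    have hxB : x ∈ B := hB x (Sym2.mem_mk_left x y)
    have hyB : y ∈ B := hB y (Sym2.mem_mk_right x y)
    rw [mem_edgeSet, hH, hA] at hxy
    tauto
  have hedges : {e | e ∈ w.edges ∧ ∀ v ∈ e, v ∈ B} ⊆ {e ∈ G.edgeSet | ∀ v ∈ e, v ∈ B} :=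
    fun e ⟨he, hB⟩ ↦ ⟨(edgeSet_sup H G ▸ w.edges_subset_edgeSet he).resolve_left
      fun heH ↦ hH_not_inside_B e heH hB, hB⟩
  have hcount := hw.ncard_le_ncard_compl_add B
  have hle := Set.ncard_le_ncard hedges
  rw [← hA] at hcount
  omega

/-- Let `A` and `B` be disjoint nonempty finite vertex sets (whose union is the whole vertex
set), let `H` be the complete bipartite graph with parts `A` and `B`, and let `G` be a
perfect matching on `A ∪ B` (every vertex has exactly one neighbour).  If `H ∪ G` contains a
Hamilton cycle, then the number of edges of `G` with both endpoints in `B` is at least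
`|B| − |A|`. -/
theorem stmt14 {V : Type*} [Fintype V] [DecidableEq V] (A B : Set V)
    (hA : A.Nonempty) (hB : B.Nonempty)
    (hdisj : Disjoint A B) (hunion : A ∪ B = Set.univ)
    (H G : SimpleGraph V)
    (hH : ∀ u v : V, H.Adj u v ↔ ((u ∈ A ∧ v ∈ B) ∨ (u ∈ B ∧ v ∈ A)))
    (hG : ∀ v : V, (G.neighborSet v).ncard = 1)
    (ham : ∃ (v : V) (w : (H ⊔ G).Walk v v), w.IsHamiltonianCycle) :
    (B.ncard : ℤ) - (A.ncard : ℤ) ≤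
      ({e ∈ G.edgeSet | ∀ v ∈ e, v ∈ B}.ncard : ℤ) :=
  stmt14_general A B hdisj hunion H G hH ham
end

section
/- Let A and B be disjoint vertex sets with A nonempty, let H be the complete bipartite graph with parts A and B, and let G be any graph on A ∪ B. If the graph H ∪ G contains a Hamilton cycle, then the induced subgraph G[B] of G on the vertex set B has at most |A| connected components. -/
/-!
Rotate the Hamilton cycle so that it starts and ends at a vertex of `A`, and walk along it.
Consecutive vertices of `B` are joined by an edge of `G` (the complete bipartite graph has no
edges inside `B`), so they lie in the same component of `G[B]`; hence the walk can enter a new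
component only at a vertex that directly follows a vertex of `A`. Each vertex of `A` is visited
once, so at most `|A|` components are met, and the cycle meets all of them.
-/

theorem List.Nodup.countP_mem_le_ncard {V : Type*} [Finite V] {l : List V} (hl : l.Nodup)
    (A : Set V) [DecidablePred (· ∈ A)] : l.countP (· ∈ A) ≤ A.ncard := by
  classical
  rw [List.countP_eq_length_filter, ← List.toFinset_card_of_nodup (hl.filter _),
    ← Set.ncard_coe_finset]
  exact Set.ncard_le_ncard (by intro x; simp)

namespace SimpleGraph

variable {V : Type*} (G : SimpleGraph V) (B : Set V)

def componentsMeeting (l : List V) : Set (G.induce B).ConnectedComponent :=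
  (G.induce B).connectedComponentMk '' {b | (b : V) ∈ l}

variable {G B}

@[simp]
lemma componentsMeeting_nil : G.componentsMeeting B [] = ∅ := by
  simp [componentsMeeting]

lemma componentsMeeting_cons_of_notMem {u : V} (hu : u ∉ B) (l : List V) :
    G.componentsMeeting B (u :: l) = G.componentsMeeting B l := by
  simp only [componentsMeeting, List.mem_cons]
  congr 1
  ext b
  simp only [Set.mem_ofPred_eq, or_iff_right_iff_imp]
  rintro rfl
  exact absurd b.2 hu

lemma componentsMeeting_cons_of_mem {u : V} (hu : u ∈ B) (l : List V) :
    G.componentsMeeting B (u :: l) =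
      insert ((G.induce B).connectedComponentMk ⟨u, hu⟩) (G.componentsMeeting B l) := by
  rw [componentsMeeting, componentsMeeting, ← Set.image_insert_eq]
  congr 1
  ext b
  simp [Subtype.ext_iff]

lemma componentsMeeting_support_eq_univ [DecidableEq V] {K : SimpleGraph V} {u v : V}
    {p : K.Walk u v} (hp : p.IsHamiltonian) : G.componentsMeeting B p.support = Set.univ :=
  Set.eq_univ_of_forall fun C ↦ C.ind fun b ↦ ⟨b, hp.mem_support b, rfl⟩

variable {K : SimpleGraph V} {A : Set V}

theorem ncard_componentsMeeting_support_le [DecidablePred (· ∈ A)] [DecidablePred (· ∈ B)]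
    (hBA : Bᶜ ⊆ A)
    (hK : ∀ x y, x ∈ B → y ∈ B → K.Adj x y → G.Adj x y) {u v : V} (p : K.Walk u v) :
    (G.componentsMeeting B p.support).ncard ≤
      p.support.tail.countP (· ∈ A) + if v ∈ B then 1 else 0 := by
  induction p with
  | @nil u =>
    by_cases hu : u ∈ B
    · simp [componentsMeeting_cons_of_mem hu, hu]
    · simp [componentsMeeting_cons_of_notMem hu, hu]
  | @cons u x v hux p ih =>
    rw [Walk.support_cons, List.tail_cons]
    by_cases hu : u ∈ B
    · rw [componentsMeeting_cons_of_mem hu]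
      by_cases hx : x ∈ B
      · have hmk : (G.induce B).connectedComponentMk ⟨u, hu⟩ =
            (G.induce B).connectedComponentMk ⟨x, hx⟩ :=
          ConnectedComponent.sound (Adj.reachable (hK u x hu hx hux))
        have hmem : (G.induce B).connectedComponentMk ⟨x, hx⟩ ∈ G.componentsMeeting B p.support :=
          ⟨⟨x, hx⟩, p.start_mem_support, rfl⟩
        rw [hmk, Set.insert_eq_of_mem hmem]
        exact ih.trans (by gcongr; exact (List.tail_sublist _).countP_le)
      · have hxA : x ∈ A := hBA hx
        calc _ ≤ (G.componentsMeeting B p.support).ncard + 1 := Set.ncard_insert_le _ _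
          _ ≤ p.support.tail.countP (· ∈ A) + 1 + if v ∈ B then 1 else 0 := by omega
          _ = _ := by
            rw [← p.cons_tail_support, List.countP_cons_of_pos (by simpa using hxA)]
            rfl
    · rw [componentsMeeting_cons_of_notMem hu]
      exact ih.trans (by gcongr; exact (List.tail_sublist _).countP_le)

theorem card_connectedComponent_induce_le_ncard [DecidableEq V] (hBA : Bᶜ ⊆ A)
    (hK : ∀ x y, x ∈ B → y ∈ B → K.Adj x y → G.Adj x y) {u v : V} {p : K.Walk u v}
    (hp : p.IsHamiltonian) (hv : v ∉ B) :
    Nat.card (G.induce B).ConnectedComponent ≤ A.ncard := by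
  classical
  have := hp.finite
  calc Nat.card (G.induce B).ConnectedComponent
      = (G.componentsMeeting B p.support).ncard := by
        rw [componentsMeeting_support_eq_univ hp, Set.ncard_univ]
    _ ≤ p.support.tail.countP (· ∈ A) := by
        simpa [hv] using ncard_componentsMeeting_support_le hBA hK p
    _ ≤ p.support.countP (· ∈ A) := (List.tail_sublist _).countP_le
    _ ≤ A.ncard := hp.isPath.support_nodup.countP_mem_le_ncard A

end SimpleGraph

theorem stmt16_general {V : Type*} [DecidableEq V] (A B : Set V)
    (hA : A.Nonempty)
    (hdisj : Disjoint A B) (hunion : A ∪ B = Set.univ)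
    (H G : SimpleGraph V)
    (hH : ∀ u v : V, H.Adj u v ↔ ((u ∈ A ∧ v ∈ B) ∨ (u ∈ B ∧ v ∈ A)))
    (ham : ∃ (v : V) (w : (H ⊔ G).Walk v v), w.IsHamiltonianCycle) :
    Nat.card (SimpleGraph.induce B G).ConnectedComponent ≤ A.ncard := by
  obtain ⟨v, w, hw⟩ := ham
  obtain ⟨a, ha⟩ := hA
  have hBA : Bᶜ ⊆ A := Set.compl_subset_iff_union.mpr (by rwa [Set.union_comm])
  have hK : ∀ x y, x ∈ B → y ∈ B → (H ⊔ G).Adj x y → G.Adj x y := by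
    rintro x y hx hy (hxy | hxy)
    · rcases (hH x y).mp hxy with ⟨hxA, -⟩ | ⟨-, hyA⟩
      · exact absurd hx (hdisj.notMem_of_mem_left hxA)
      · exact absurd hy (hdisj.notMem_of_mem_left hyA)
    · exact hxy
  exact SimpleGraph.card_connectedComponent_induce_le_ncard hBA hK
    (hw.rotate (hw.mem_support a)).isHamiltonian_tail (hdisj.notMem_of_mem_left ha)

/-- Let `A` and `B` be disjoint vertex sets with `A` nonempty (whose union is the whole
vertex set), let `H` be the complete bipartite graph with parts `A` and `B`, and let `G` be
any graph on `A ∪ B`.  If `H ∪ G` contains a Hamilton cycle, then the induced subgraph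
`G[B]` has at most `|A|` connected components. -/
theorem stmt16 {V : Type*} [Fintype V] [DecidableEq V] (A B : Set V)
    (hA : A.Nonempty)
    (hdisj : Disjoint A B) (hunion : A ∪ B = Set.univ)
    (H G : SimpleGraph V)
    (hH : ∀ u v : V, H.Adj u v ↔ ((u ∈ A ∧ v ∈ B) ∨ (u ∈ B ∧ v ∈ A)))
    (ham : ∃ (v : V) (w : (H ⊔ G).Walk v v), w.IsHamiltonianCycle) :
    Nat.card (SimpleGraph.induce B G).ConnectedComponent ≤ A.ncard :=
  stmt16_general A B hA hdisj hunion H G hH ham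
end

section
/- Let n ≥ 1 and let M be a perfect matching of the 2n-point set [n] × {1, 2} chosen uniformly at random. Define a relation on [n] by letting j and k be related whenever M matches some point (j, s) with some point (k, t). Then the expected number of equivalence classes of the transitive-reflexive closure of this relation (i.e. the expected number of connected components of the multigraph on [n] induced by M) equals Σ_{i=1}^{n} 1/(2i − 1), which is at most 2·log n for all sufficiently large n. -/
/-!
A perfect matching of `V × Fin 2` is encoded as a fixed-point-free involution. Write `Mₙ` for the
number of matchings of `Fin n × Fin 2` and `Cₙ` for the total number of components over all of
them. In a matching of `Option V × Fin 2` the point `(none, 0)` has `2|V| + 1` possible partners.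
If it is `(none, 1)`, the block `none` is a component by itself and the rest is an arbitrary
matching of `V`. Otherwise, splicing out the block `none` (matching the two remaining partners
of its points with each other) gives a matching of `V` with the same number of components, and
this is a bijection. Hence `Mₙ₊₁ = (2n + 1) Mₙ` and `Cₙ₊₁ = Mₙ + (2n + 1) Cₙ`, so the expectation
`Cₙ / Mₙ` grows by `1 / (2n + 1)` at each step. Finally `∑ 1 / (2i + 1) ≤ Hₙ ≤ 1 + log n`.
-/

open Function Relation

namespace RandomMatching

variable {α β V W : Type*}

def IsMatching (f : α → α) : Prop := ∀ x, f (f x) = x ∧ f x ≠ x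

instance [Fintype α] [DecidableEq α] (f : α → α) : Decidable (IsMatching f) :=
  inferInstanceAs (Decidable (∀ _, _ ∧ _))

lemma IsMatching.conj {f : α → α} (hf : IsMatching f) (σ : α ≃ β) : IsMatching (σ.conj f) := by
  intro y
  simp only [Equiv.conj_apply, Equiv.symm_apply_apply, (hf _).1, Equiv.apply_symm_apply, ne_eq,
    true_and, ← Equiv.eq_symm_apply]
  exact (hf _).2

lemma isMatching_conj_iff {f : α → α} (σ : α ≃ β) : IsMatching (σ.conj f) ↔ IsMatching f :=
  ⟨fun h => by simpa [← Equiv.conj_symm] using h.conj σ.symm, fun h => h.conj σ⟩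

abbrev Matching (V : Type*) := {f : V × Fin 2 → V × Fin 2 // IsMatching f}

def Matching.congr (e : V ≃ W) : Matching V ≃ Matching W :=
  Equiv.subtypeEquiv (e.prodCongr (Equiv.refl _)).conj fun _ => (isMatching_conj_iff _).symm

section Graph

def toGraph {f : α → α} (hf : IsMatching f) : SimpleGraph α where
  Adj p q := f p = q
  symm := ⟨fun p _ h => h ▸ (hf p).1⟩
  loopless := ⟨fun p => (hf p).2⟩

lemma neighborSet_toGraph {f : α → α} (hf : IsMatching f) (p : α) :
    (toGraph hf).neighborSet p = {f p} :=
  Set.ext fun _ => by simp [toGraph, eq_comm]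

variable (G : {G : SimpleGraph α // ∀ p, (G.neighborSet p).ncard = 1})

noncomputable def partner (p : α) : α := (Set.ncard_eq_one.mp (G.2 p)).choose

lemma adj_iff_partner_eq {p q : α} : G.1.Adj p q ↔ partner G p = q := by
  rw [← SimpleGraph.mem_neighborSet, (Set.ncard_eq_one.mp (G.2 p)).choose_spec,
    Set.mem_singleton_iff, eq_comm, partner]

lemma isMatching_partner : IsMatching (partner G) := fun p =>
  have h : G.1.Adj p (partner G p) := (adj_iff_partner_eq G).2 rfl
  ⟨(adj_iff_partner_eq G).1 h.symm, fun hp => G.1.loopless.irrefl p (by rwa [hp] at h)⟩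

noncomputable def matchingEquivGraph :
    {f : α → α // IsMatching f} ≃ {G : SimpleGraph α // ∀ p, (G.neighborSet p).ncard = 1} where
  toFun f := ⟨toGraph f.2, fun p => by rw [neighborSet_toGraph, Set.ncard_singleton]⟩
  invFun G := ⟨partner G, isMatching_partner G⟩
  left_inv f := Subtype.ext <| funext fun p => (adj_iff_partner_eq _).1 rfl
  right_inv G := Subtype.ext <| SimpleGraph.ext <| funext₂ fun _ _ =>
    propext (adj_iff_partner_eq G).symm

end Graph

section Components

def Linked (f : V × Fin 2 → V × Fin 2) (j k : V) : Prop := ∃ s t, f (j, s) = (k, t)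

noncomputable def numComponents (f : V × Fin 2 → V × Fin 2) : ℕ :=
  Nat.card (Quot (ReflTransGen (Linked f)))

lemma card_quot_reflTransGen_eq {r : α → α → Prop} {r' : β → β → Prop} (φ : α → β) (ψ : β → α)
    (hφ : r ≤ (ReflTransGen r' on φ)) (hψ : r' ≤ (ReflTransGen r on ψ))
    (hψφ : ∀ a, ReflTransGen r (ψ (φ a)) a) (hφψ : ∀ b, ReflTransGen r' (φ (ψ b)) b) :
    Nat.card (Quot (ReflTransGen r)) = Nat.card (Quot (ReflTransGen r')) :=
  Nat.card_congr
    { toFun := Quot.lift (Quot.mk _ ∘ φ) fun _ _ h => Quot.sound (ReflTransGen.lift' φ hφ _ _ h)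
      invFun := Quot.lift (Quot.mk _ ∘ ψ) fun _ _ h => Quot.sound (ReflTransGen.lift' ψ hψ _ _ h)
      left_inv := Quot.ind fun a => Quot.sound (hψφ a)
      right_inv := Quot.ind fun b => Quot.sound (hφψ b) }

lemma numComponents_conj_prodCongr (e : V ≃ W) (f : V × Fin 2 → V × Fin 2) :
    numComponents ((e.prodCongr (Equiv.refl (Fin 2))).conj f) = numComponents f := by
  refine card_quot_reflTransGen_eq e.symm e ?_ ?_ (fun j => by simpa using .refl)
    (fun v => by simpa using .refl)
  · rintro j k ⟨s, t, h⟩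
    refine .single ⟨s, t, ?_⟩
    simpa [Equiv.conj_apply, Prod.ext_iff, Equiv.eq_symm_apply] using h
  · rintro v w ⟨s, t, h⟩
    exact .single ⟨s, t, by simp [Equiv.conj_apply, h]⟩

def quotOptionRelEquiv (r : α → α → Prop) :
    Quot (ReflTransGen (Option.Rel r)) ≃ Option (Quot (ReflTransGen r)) where
  toFun := Quot.lift (Option.map (Quot.mk _)) fun a b h => by
    have := ReflTransGen.lift (p := Eq) (Option.map (Quot.mk (ReflTransGen r))) ?_ _ _ h
    · rwa [reflTransGen_eq_self (r := @Eq (Option (Quot (ReflTransGen r))))] at this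
    · rintro _ _ (⟨h⟩ | _)
      · exact congrArg some (Quot.sound (.single h))
      · rfl
  invFun o := o.elim (Quot.mk _ none) <| Quot.lift (Quot.mk _ ∘ some) fun _ _ h =>
    Quot.sound (ReflTransGen.lift some (fun _ _ => Option.Rel.some) _ _ h)
  left_inv := Quot.ind fun | none => rfl | some _ => rfl
  right_inv := fun | none => rfl | some q => by induction q using Quot.ind; rfl

lemma reflTransGen_linked_conj {σ : Equiv.Perm (V × Fin 2)} (hσ : Involutive σ)
    {f : V × Fin 2 → V × Fin 2}
    (hmove : ∀ q, ReflTransGen (Linked (σ.conj f)) q.1 (σ q).1) {j k : V} (hjk : Linked f j k) :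
    ReflTransGen (Linked (σ.conj f)) j k := by
  obtain ⟨s, t, h⟩ := hjk
  have hlink : Linked (σ.conj f) (σ (j, s)).1 (σ (k, t)).1 :=
    ⟨(σ (j, s)).2, (σ (k, t)).2, by simp [Equiv.conj_apply, h]⟩
  exact ((hmove (j, s)).tail hlink).trans (by simpa only [hσ (k, t)] using hmove (σ (k, t)))

end Components

section Extend

def extend (g : V × Fin 2 → V × Fin 2) : Option V × Fin 2 → Option V × Fin 2
  | (none, s) => (none, s + 1)
  | (some v, s) => Prod.map some id (g (v, s))

def restrict (f : Option V × Fin 2 → Option V × Fin 2) (x : V × Fin 2) : V × Fin 2 :=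
  match f (some x.1, x.2) with
  | (some w, s) => (w, s)
  | (none, _) => x

variable {g : V × Fin 2 → V × Fin 2} {f : Option V × Fin 2 → Option V × Fin 2}

lemma extend_map_some (y : V × Fin 2) : extend g (Prod.map some id y) = Prod.map some id (g y) :=
  rfl

lemma linked_extend : Linked (extend g) = Option.Rel (Linked g) := by
  ext (_ | j) (_ | k) <;> simp [Linked, extend, Prod.ext_iff]

lemma numComponents_extend [Finite V] : numComponents (extend g) = numComponents g + 1 := by
  rw [numComponents, linked_extend, Nat.card_congr (quotOptionRelEquiv _), Finite.card_option,
    numComponents]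

lemma isMatching_extend_iff : IsMatching (extend g) ↔ IsMatching g := by
  have hsome (y : V × Fin 2) :
      (extend g (extend g (Prod.map some id y)) = Prod.map some id y ∧
        extend g (Prod.map some id y) ≠ Prod.map some id y) ↔ (g (g y) = y ∧ g y ≠ y) := by
    simp only [extend_map_some, ne_eq, ((Option.some_injective V).prodMap injective_id).eq_iff]
  refine ⟨fun h y => (hsome y).1 (h _), fun h => ?_⟩
  rintro ⟨_ | v, s⟩
  · fin_cases s <;> simp [extend]
  · exact (hsome (v, s)).2 (h _)

lemma restrict_extend : restrict (extend g) = g := by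
  funext x
  rcases hgx : g x with ⟨w, t⟩
  simp [restrict, extend, hgx]

lemma extend_restrict (hf : IsMatching f) (h0 : f (none, 0) = (none, 1)) :
    extend (restrict f) = f := by
  have h1 : f (none, 1) = (none, 0) := by rw [← h0, (hf _).1]
  have hnone (s : Fin 2) : f (none, s) = (none, s + 1) := by
    fin_cases s
    exacts [h0, h1]
  funext x
  rcases x with ⟨_ | v, s⟩
  · exact (hnone s).symm
  rcases hfx : f (some v, s) with ⟨_ | w, t⟩
  · have := (hf (some v, s)).1
    simp [hfx, hnone] at this
  · simp [extend, restrict, hfx]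

lemma reflTransGen_getD_extend (w : V) (y : Option V × Fin 2) :
    ReflTransGen (Linked g) (y.1.getD w) ((extend g y).1.getD w) := by
  rcases y with ⟨_ | v, s⟩
  · exact .refl
  · exact .single ⟨s, _, rfl⟩

lemma IsMatching.restrict (hf : IsMatching f) (h0 : f (none, 0) = (none, 1)) :
    IsMatching (restrict f) :=
  isMatching_extend_iff.1 (extend_restrict hf h0 ▸ hf)

end Extend

section SwapConj

variable [DecidableEq V]

/-- Conjugating by the transposition of `(none, 1)` and `p` turns a matching pairing `(none, 0)`
with `p` into one pairing `(none, 0)` with `(none, 1)`; followed by `restrict`, this is the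
splicing of the block `none`, and `swapConj p ∘ extend` is its inverse. -/
def swapConj (p : Option V × Fin 2) :
    (Option V × Fin 2 → Option V × Fin 2) ≃ (Option V × Fin 2 → Option V × Fin 2) :=
  (Equiv.swap (none, 1) p).conj

lemma swapConj_swapConj (p : Option V × Fin 2) (f : Option V × Fin 2 → Option V × Fin 2) :
    swapConj p (swapConj p f) = f := by
  funext x
  simp [swapConj, Equiv.conj_apply]

lemma swapConj_apply_none_zero {p : Option V × Fin 2} (hp : p ≠ (none, 0))
    (f : Option V × Fin 2 → Option V × Fin 2) :
    swapConj p f (none, 0) = Equiv.swap (none, 1) p (f (none, 0)) := by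
  rw [swapConj, Equiv.conj_apply, Equiv.symm_swap,
    Equiv.swap_apply_of_ne_of_ne (by simp) hp.symm]

lemma IsMatching.swapConj {f : Option V × Fin 2 → Option V × Fin 2} (hf : IsMatching f)
    (p : Option V × Fin 2) : IsMatching (swapConj p f) :=
  hf.conj _

variable {g : V × Fin 2 → V × Fin 2}

lemma numComponents_swapConj_some_extend (hg : IsMatching g) (w : V) (t : Fin 2) :
    numComponents (swapConj (some w, t) (extend g)) = numComponents g := by
  set σ := Equiv.swap ((none : Option V), (1 : Fin 2)) (some w, t)
  set h := swapConj (some w, t) (extend g) with h_def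
  have hh : IsMatching h := (isMatching_extend_iff.2 hg).swapConj _
  have h0 : h (none, 0) = (some w, t) := by
    rw [h_def, swapConj_apply_none_zero (by simp)]
    exact Equiv.swap_apply_left _ _
  have hw : h (some w, t) = (none, 0) := by rw [← h0, (hh _).1]
  have hσ (q : Option V × Fin 2) : (σ q).1.getD w = q.1.getD w := by
    rw [Equiv.swap_apply_def]
    split_ifs <;> simp_all
  have hmove (q : Option V × Fin 2) : ReflTransGen (Linked h) q.1 (σ q).1 := by
    rcases eq_or_ne q (none, 1) with rfl | h1
    · rw [Equiv.swap_apply_left]; exact .single ⟨0, t, h0⟩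
    rcases eq_or_ne q (some w, t) with rfl | h2
    · rw [Equiv.swap_apply_right]; exact .single ⟨t, 0, hw⟩
    · rw [Equiv.swap_apply_of_ne_of_ne h1 h2]
  -- the block `none` merges into the component of `w`; `σ` preserves the projection `getD w`
  refine card_quot_reflTransGen_eq (fun j => j.getD w) some ?_ ?_ ?_ (fun _ => .refl)
  · rintro j k ⟨s, u, hjk⟩
    have hext : extend g (σ (j, s)) = σ (k, u) := by
      rw [← hjk]; simp [h_def, σ, swapConj, Equiv.conj_apply]
    simpa only [hext, hσ] using reflTransGen_getD_extend (g := g) w (σ (j, s))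
  · intro x y hxy
    exact reflTransGen_linked_conj (fun q => Equiv.swap_apply_self _ _ q) hmove
      (by rw [linked_extend]; exact .some hxy)
  · rintro (_ | x)
    · exact .single ⟨t, 0, hw⟩
    · exact .refl

lemma numComponents_swapConj_extend [Finite V] (hg : IsMatching g) {p : Option V × Fin 2}
    (hp : p ≠ (none, 0)) :
    numComponents (swapConj p (extend g)) = numComponents g + if p = (none, 1) then 1 else 0 := by
  rcases p with ⟨_ | w, t⟩
  · obtain rfl : t = 1 := by fin_cases t <;> simp_all
    simp [swapConj, numComponents_extend]
  · simp [numComponents_swapConj_some_extend hg]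

def matchingOptionEquiv :
    Matching (Option V) ≃ {p : Option V × Fin 2 // p ≠ (none, 0)} × Matching V where
  toFun f := (⟨f.1 (none, 0), (f.2 _).2⟩,
    ⟨restrict (swapConj (f.1 (none, 0)) f.1), (f.2.swapConj _).restrict <| by
      rw [swapConj_apply_none_zero (f.2 _).2]; exact Equiv.swap_apply_right _ _⟩)
  invFun pg := ⟨swapConj pg.1.1 (extend pg.2.1), (isMatching_extend_iff.2 pg.2.2).swapConj _⟩
  left_inv f := Subtype.ext <| by
    dsimp only
    rw [extend_restrict (f.2.swapConj _), swapConj_swapConj]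
    rw [swapConj_apply_none_zero (f.2 _).2]; exact Equiv.swap_apply_right _ _
  right_inv := fun ⟨⟨p, hp⟩, g⟩ => by
    have hp0 : swapConj p (extend g.1) (none, 0) = p := by
      rw [swapConj_apply_none_zero hp]; exact Equiv.swap_apply_left _ _
    ext1
    · exact Subtype.ext hp0
    · exact Subtype.ext <| by simp only [hp0, swapConj_swapConj, restrict_extend]

end SwapConj

section Counting

variable [Fintype V] [DecidableEq V]

lemma card_ne_none_zero :
    Fintype.card {p : Option V × Fin 2 // p ≠ (none, 0)} = 2 * Fintype.card V + 1 := by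
  simp [Fintype.card_subtype_compl, Fintype.card_option]
  ring

lemma card_matching_option :
    Fintype.card (Matching (Option V)) = (2 * Fintype.card V + 1) * Fintype.card (Matching V) := by
  rw [Fintype.card_congr matchingOptionEquiv, Fintype.card_prod, card_ne_none_zero]

lemma sum_numComponents_option :
    ∑ f : Matching (Option V), numComponents f.1 =
      Fintype.card (Matching V) +
        (2 * Fintype.card V + 1) * ∑ g : Matching V, numComponents g.1 := by
  have hone : ∑ p : {p : Option V × Fin 2 // p ≠ (none, 0)},
      (if p.1 = (none, 1) then Fintype.card (Matching V) else 0) = Fintype.card (Matching V) := by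
    rw [Fintype.sum_eq_single ⟨(none, 1), by simp⟩
      fun p hp => if_neg fun e => hp (Subtype.ext e)]
    simp
  rw [← matchingOptionEquiv.symm.sum_comp, Fintype.sum_prod_type]
  have hterm (p : {p : Option V × Fin 2 // p ≠ (none, 0)}) (g : Matching V) :
      numComponents (swapConj p.1 (extend g.1)) =
        numComponents g.1 + if p.1 = (none, 1) then 1 else 0 :=
    numComponents_swapConj_extend g.2 p.2
  simp only [matchingOptionEquiv, Equiv.coe_fn_symm_mk, hterm, Finset.sum_add_distrib,
    Finset.sum_const, Finset.card_univ, card_ne_none_zero, smul_eq_mul, mul_boole, hone]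
  ring

end Counting

lemma card_matching_fin_succ (n : ℕ) :
    Fintype.card (Matching (Fin (n + 1))) = (2 * n + 1) * Fintype.card (Matching (Fin n)) := by
  rw [Fintype.card_congr (Matching.congr (finSuccEquiv n)), card_matching_option, Fintype.card_fin]

lemma sum_numComponents_fin_succ (n : ℕ) :
    ∑ f : Matching (Fin (n + 1)), numComponents f.1 =
      Fintype.card (Matching (Fin n)) +
        (2 * n + 1) * ∑ g : Matching (Fin n), numComponents g.1 := by
  have h := sum_numComponents_option (V := Fin n)
  rw [Fintype.card_fin] at h
  rw [← h, ← (Matching.congr (finSuccEquiv n).symm).sum_comp]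
  exact Finset.sum_congr rfl fun f _ => numComponents_conj_prodCongr _ _

lemma card_matching_fin_pos (n : ℕ) : 0 < Fintype.card (Matching (Fin n)) := by
  induction n with
  | zero => exact Fintype.card_pos_iff.2 ⟨⟨id, fun x => x.1.elim0⟩⟩
  | succ n ih => rw [card_matching_fin_succ]; positivity

lemma sum_numComponents_fin (n : ℕ) :
    (∑ f : Matching (Fin n), (numComponents f.1 : ℝ)) =
      Fintype.card (Matching (Fin n)) * ∑ i ∈ Finset.range n, 1 / (2 * (i : ℝ) + 1) := by
  induction n with
  | zero => simp [numComponents]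
  | succ n ih =>
    rw [← Nat.cast_sum, sum_numComponents_fin_succ, card_matching_fin_succ,
      Finset.sum_range_succ]
    push_cast
    rw [ih]
    field_simp
    ring

theorem expected_numComponents (n : ℕ) :
    (∑ f : Matching (Fin n), (numComponents f.1 : ℝ)) / Fintype.card (Matching (Fin n)) =
      ∑ i ∈ Finset.range n, 1 / (2 * (i : ℝ) + 1) := by
  rw [sum_numComponents_fin, mul_div_cancel_left₀]
  exact_mod_cast (card_matching_fin_pos n).ne'

lemma sum_inv_odd_le_two_mul_log {n : ℕ} (hn : 3 ≤ n) :
    ∑ i ∈ Finset.range n, 1 / (2 * (i : ℝ) + 1) ≤ 2 * Real.log n := by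
  have hharm : ∑ i ∈ Finset.range n, 1 / (2 * (i : ℝ) + 1) ≤ harmonic n := by
    rw [harmonic, Rat.cast_sum]
    gcongr with i
    push_cast
    rw [one_div]
    gcongr
    linarith [(i.cast_nonneg : (0 : ℝ) ≤ i)]
  have hlog : 1 ≤ Real.log n := by
    have h3 : (3 : ℝ) ≤ n := by exact_mod_cast hn
    rw [Real.le_log_iff_exp_le (by positivity)]
    linarith [Real.exp_one_lt_three]
  linarith [harmonic_le_one_add_log n]

end RandomMatching

/-- For a uniformly random perfect matching `M` of the `2n`-point set `[n] × {1, 2}` (viewed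
as a simple graph in which every point has exactly one neighbour), consider the relation on
`[n]` relating `j` and `k` whenever `M` matches some point `(j, s)` with some point `(k, t)`.
The expected number of equivalence classes of the reflexive-transitive closure of this
relation (i.e. of connected components of the multigraph on `[n]` induced by `M`) equals
`∑_{i=1}^{n} 1/(2i − 1)`, and this sum is at most `2 log n` for all sufficiently large `n`. -/
theorem stmt17 :
    (∀ n : ℕ, 1 ≤ n →
      (∑ᶠ M : {M' : SimpleGraph (Fin n × Fin 2) //
            ∀ p : Fin n × Fin 2, (M'.neighborSet p).ncard = 1},
          (Nat.card (Quot (Relation.ReflTransGen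
            (fun j k : Fin n => ∃ s t : Fin 2, M.1.Adj (j, s) (k, t)))) : ℝ)) /
        (Nat.card {M' : SimpleGraph (Fin n × Fin 2) //
            ∀ p : Fin n × Fin 2, (M'.neighborSet p).ncard = 1} : ℝ)
      = ∑ i ∈ Finset.range n, (1 : ℝ) / (2 * (i : ℝ) + 1)) ∧
    ∃ n₀ : ℕ, ∀ n ≥ n₀,
      (∑ i ∈ Finset.range n, (1 : ℝ) / (2 * (i : ℝ) + 1)) ≤ 2 * Real.log n := by
  refine ⟨fun n _ => ?_, 3, fun n hn => RandomMatching.sum_inv_odd_le_two_mul_log hn⟩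
  rw [← finsum_comp_equiv RandomMatching.matchingEquivGraph,
    ← Nat.card_congr RandomMatching.matchingEquivGraph, finsum_eq_sum_of_fintype,
    Nat.card_eq_fintype_card]
  exact RandomMatching.expected_numComponents n
end
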